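/- arXiv:2010.08990 — 9 statements merged into one kernel-verified Lean document; each statement's English description precedes it below -/
import Mathlib

section
/- Let n ≥ 1 be an integer and let G and Ĝ be CDFs on [0,1] such that Ĝ is a mean-preserving spread of G. Then the expected maximum of n i.i.d. draws is weakly larger under Ĝ than under G, i.e. ∫₀¹ Ĝ(x)ⁿ dx ≤ ∫₀¹ G(x)ⁿ dx. Moreover, if n ≥ 2 and additionally ∫₀ˣ (Ĝ(t) − G(t)) dt > 0 for all x in some set of positive measure under the probability measure induced by G, then the inequality is strict. -/
/-!
With `d = Ĝ - G`, `D x = ∫₀ˣ d` and `h = ∑_{k<n} Ĝ^k G^(n-1-k)` we have `Ĝⁿ - Gⁿ = d h` on `[0,1]`.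
Integrating by parts against the Stieltjes measure of the nondecreasing `h`, and using
`D 0 = D 1 = 0`, gives `∫₀¹ Ĝⁿ - ∫₀¹ Gⁿ = -∫_{(0,1]} D dh ≤ 0`. For `n ≥ 2` the term `G^(n-1)`
makes `h` strictly increase wherever `G` does, so `dh` charges the open set `{D > 0}` whenever
`dG` does, and the inequality is strict.
-/
open MeasureTheory Set

namespace StieltjesFunction

lemma monotone_posPart_pow_mul (F G : StieltjesFunction ℝ) (k m : ℕ) :
    Monotone fun x => max (F x) 0 ^ k * max (G x) 0 ^ m := fun _ _ hxy =>
  mul_le_mul (pow_le_pow_left₀ (le_max_right _ _) (max_le_max_right 0 (F.mono hxy)) k)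
    (pow_le_pow_left₀ (le_max_right _ _) (max_le_max_right 0 (G.mono hxy)) m) (by positivity)
    (by positivity)

/-- The positive parts make `∑_{k<n} F^k G^(n-1-k)` monotone on all of `ℝ`. -/
noncomputable def geomSum₂ (F G : StieltjesFunction ℝ) (n : ℕ) : StieltjesFunction ℝ where
  toFun x := ∑ k ∈ Finset.range n, max (F x) 0 ^ k * max (G x) 0 ^ (n - 1 - k)
  mono' _ _ hxy := Finset.sum_le_sum fun k _ => monotone_posPart_pow_mul F G k _ hxy
  right_continuous' x := tendsto_finsetSum _ fun k _ =>
    (((F.right_continuous x).max continuousWithinAt_const).pow k).mul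
      (((G.right_continuous x).max continuousWithinAt_const).pow _)

lemma pow_sub_pow_eq_mul_geomSum₂ (F G : StieltjesFunction ℝ) (n : ℕ) {x : ℝ} (hF : 0 ≤ F x)
    (hG : 0 ≤ G x) : F x ^ n - G x ^ n = (F x - G x) * F.geomSum₂ G n x := by
  rw [← geom_sum₂_mul, mul_comm]
  simp only [geomSum₂, max_eq_left hF, max_eq_left hG]

lemma geomSum₂_lt_geomSum₂ (F G : StieltjesFunction ℝ) {n : ℕ} (hn : 2 ≤ n) {a b : ℝ}
    (hab : a ≤ b) (hGa : 0 ≤ G a) (hG : G a < G b) : F.geomSum₂ G n a < F.geomSum₂ G n b := by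
  refine Finset.sum_lt_sum (fun k _ => monotone_posPart_pow_mul F G k _ hab)
    ⟨0, Finset.mem_range.2 (by omega), ?_⟩
  simp only [pow_zero, one_mul, max_eq_left hGa, max_eq_left (hGa.trans hG.le)]
  exact pow_lt_pow_left₀ hG hGa (by omega)

lemma intervalIntegrable_sub (F G : StieltjesFunction ℝ) (a b : ℝ) :
    IntervalIntegrable (fun t => F t - G t) volume a b :=
  F.mono.intervalIntegrable.sub G.mono.intervalIntegrable

/-- Write `f x = f a + μ_f (a, x]` and apply Fubini. -/
theorem intervalIntegral_mul_eq (f : StieltjesFunction ℝ) {d : ℝ → ℝ} {a b : ℝ} (hab : a ≤ b)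
    (hd : IntervalIntegrable d volume a b) :
    ∫ x in a..b, d x * f x =
      f a * (∫ x in a..b, d x) + ∫ t in Ioc a b, (∫ x in t..b, d x) ∂f.measure := by
  have : IsFiniteMeasure (f.measure.restrict (Ioc a b)) := by
    rw [isFiniteMeasure_restrict, f.measure_Ioc]; exact ENNReal.ofReal_ne_top
  set K : ℝ × ℝ → ℝ := {p | p.2 ≤ p.1}.indicator fun p => d p.1
  have hK : Integrable K ((volume.restrict (Ioc a b)).prod (f.measure.restrict (Ioc a b))) :=
    (hd.1.comp_fst _).indicator (measurableSet_le measurable_snd measurable_fst)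
  have hinner : ∀ x ∈ Ioc a b,
      f a * d x + ∫ t in Ioc a b, K (x, t) ∂f.measure = d x * f x := by
    intro x hx
    have hKx : ∀ t, K (x, t) = d x * (Iic x).indicator 1 t := fun t => by
      by_cases ht : t ≤ x <;> simp [K, ht]
    rw [integral_congr_ae (ae_of_all _ hKx), integral_const_mul, integral_indicator_one
      measurableSet_Iic, measureReal_restrict_apply measurableSet_Iic,
      Iic_inter_Ioc_of_le hx.2, measureReal_def, f.measure_Ioc,
      ENNReal.toReal_ofReal (sub_nonneg.2 (f.mono hx.1.le))]
    ring
  have houter : ∀ t ∈ Ioc a b, ∫ x in Ioc a b, K (x, t) = ∫ x in t..b, d x := by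
    intro t ht
    have hKt : ∀ x, K (x, t) = (Ici t).indicator d x := fun x => by
      by_cases hx : t ≤ x <;> simp [K, hx]
    rw [integral_congr_ae (ae_of_all _ hKt), setIntegral_indicator measurableSet_Ici,
      show Ioc a b ∩ Ici t = Icc t b by
        ext; simp only [mem_inter_iff, mem_Ioc, mem_Ici, mem_Icc]; grind,
      integral_Icc_eq_integral_Ioc, intervalIntegral.integral_of_le ht.2]
  rw [intervalIntegral.integral_of_le hab, intervalIntegral.integral_of_le hab,
    ← setIntegral_congr_fun measurableSet_Ioc hinner,
    integral_add (hd.1.const_mul _) hK.integral_prod_left, integral_const_mul]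
  congr 1
  rw [integral_integral_swap (f := fun x t => K (x, t)) hK]
  exact setIntegral_congr_fun measurableSet_Ioc houter

theorem measure_pos_of_lt_imp_lt {f g : StieltjesFunction ℝ} {U : Set ℝ}
    (hU : IsOpen U) (hfg : ∀ a b, Icc a b ⊆ U → g a < g b → f a < f b)
    (hg : 0 < g.measure U) : 0 < f.measure U := by
  obtain ⟨x, hxU, hx⟩ := Measure.nonempty_inter_support_of_pos hg
  obtain ⟨ε, hε, hball⟩ := Metric.isOpen_iff.1 hU x hxU
  have hIcc : Icc (x - ε / 2) (x + ε / 2) ⊆ U :=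
    Real.closedBall_eq_Icc ▸ (Metric.closedBall_subset_ball (half_lt_self hε)).trans hball
  have hg_pos := (Measure.mem_support_iff_forall x).1 hx _
    (Ioc_mem_nhds (by linarith : x - ε / 2 < x) (by linarith : x < x + ε / 2))
  rw [g.measure_Ioc, ENNReal.ofReal_pos, sub_pos] at hg_pos
  calc 0 < f.measure (Ioc (x - ε / 2) (x + ε / 2)) := by
        rw [f.measure_Ioc, ENNReal.ofReal_pos, sub_pos]; exact hfg _ _ hIcc hg_pos
    _ ≤ f.measure U := measure_mono (Ioc_subset_Icc_self.trans hIcc)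

end StieltjesFunction

section MeanPreservingSpread

variable {n : ℕ} {G Ghat : StieltjesFunction ℝ}

theorem integral_pow_sub_integral_pow_eq (hG : ∀ x ∈ Icc (0:ℝ) 1, 0 ≤ G x)
    (hGhat : ∀ x ∈ Icc (0:ℝ) 1, 0 ≤ Ghat x) (hMean : ∫ t in (0:ℝ)..1, (Ghat t - G t) = 0) :
    (∫ x in (0:ℝ)..1, Ghat x ^ n) - ∫ x in (0:ℝ)..1, G x ^ n =
      -∫ t in Ioc 0 1, (∫ x in (0:ℝ)..t, (Ghat x - G x)) ∂(Ghat.geomSum₂ G n).measure := by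
  have hpow : ∀ F : StieltjesFunction ℝ, (∀ x ∈ Icc (0:ℝ) 1, 0 ≤ F x) →
      IntervalIntegrable (fun x => F x ^ n) volume 0 1 := fun F hF =>
    MonotoneOn.intervalIntegrable (by
      rw [uIcc_of_le zero_le_one]
      exact fun x hx _ _ hxy => pow_le_pow_left₀ (hF x hx) (F.mono hxy) n)
  rw [← intervalIntegral.integral_sub (hpow _ hGhat) (hpow _ hG),
    intervalIntegral.integral_congr (g := fun x => (Ghat x - G x) * Ghat.geomSum₂ G n x)
      fun x hx => by
        rw [uIcc_of_le zero_le_one] at hx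
        exact Ghat.pow_sub_pow_eq_mul_geomSum₂ G n (hGhat x hx) (hG x hx),
    StieltjesFunction.intervalIntegral_mul_eq _ zero_le_one (Ghat.intervalIntegrable_sub G 0 1),
    hMean, mul_zero, zero_add, ← integral_neg]
  refine setIntegral_congr_fun measurableSet_Ioc fun t _ => ?_
  rw [← intervalIntegral.integral_interval_sub_left (Ghat.intervalIntegrable_sub G 0 1)
    (Ghat.intervalIntegrable_sub G 0 t), hMean, zero_sub]

theorem setIntegral_primitive_pos (hn : 2 ≤ n) (hG : ∀ x ∈ Icc (0:ℝ) 1, 0 ≤ G x)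
    (hMPS : ∀ x ∈ Icc (0:ℝ) 1, 0 ≤ ∫ t in (0:ℝ)..x, (Ghat t - G t))
    (hMean : ∫ t in (0:ℝ)..1, (Ghat t - G t) = 0)
    (hpos : 0 < G.measure {x | x ∈ Icc (0:ℝ) 1 ∧ 0 < ∫ t in (0:ℝ)..x, (Ghat t - G t)}) :
    0 < ∫ t in Ioc 0 1, (∫ x in (0:ℝ)..t, (Ghat x - G x)) ∂(Ghat.geomSum₂ G n).measure := by
  set D : ℝ → ℝ := fun x => ∫ t in (0:ℝ)..x, (Ghat t - G t)
  have hD : Continuous D := intervalIntegral.continuous_primitive (Ghat.intervalIntegrable_sub G) 0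
  set U := {x | 0 < D x} ∩ Ioo 0 1
  have hSU : {x | x ∈ Icc (0:ℝ) 1 ∧ 0 < D x} ⊆ U := by
    rintro x ⟨hx, hDx⟩
    refine ⟨hDx, lt_of_le_of_ne hx.1 ?_, lt_of_le_of_ne hx.2 ?_⟩ <;> rintro rfl
    · simp [D] at hDx
    · exact hDx.ne' hMean
  have hU : 0 < (Ghat.geomSum₂ G n).measure U := by
    refine StieltjesFunction.measure_pos_of_lt_imp_lt ((isOpen_lt continuous_const hD).inter
      isOpen_Ioo) (fun a b hab hGab => ?_) (hpos.trans_le (measure_mono hSU))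
    have hle : a ≤ b := le_of_not_gt fun h => hGab.not_ge (G.mono h.le)
    exact Ghat.geomSum₂_lt_geomSum₂ G hn hle
      (hG a (Ioo_subset_Icc_self (hab ⟨le_rfl, hle⟩).2)) hGab
  rw [setIntegral_pos_iff_support_of_nonneg_ae
    (ae_restrict_of_forall_mem measurableSet_Ioc fun t ht => hMPS t (Ioc_subset_Icc_self ht))
    ((hD.continuousOn.integrableOn_compact isCompact_Icc).mono_set Ioc_subset_Icc_self)]
  exact hU.trans_le (measure_mono fun x hx => ⟨hx.1.ne', Ioo_subset_Ioc_self hx.2⟩)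

end MeanPreservingSpread

theorem stmt0_general (n : ℕ) (G Ghat : StieltjesFunction ℝ)
    (hG01 : ∀ x ∈ Set.Icc (0:ℝ) 1, G x ∈ Set.Icc (0:ℝ) 1)
    (hGhat01 : ∀ x ∈ Set.Icc (0:ℝ) 1, Ghat x ∈ Set.Icc (0:ℝ) 1)
    (hMPS : ∀ x ∈ Set.Icc (0:ℝ) 1, 0 ≤ ∫ t in (0:ℝ)..x, (Ghat t - G t))
    (hMean : (∫ t in (0:ℝ)..1, (Ghat t - G t)) = 0) :
    (∫ x in (0:ℝ)..1, (Ghat x) ^ n) ≤ (∫ x in (0:ℝ)..1, (G x) ^ n) ∧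
    (2 ≤ n →
      0 < G.measure {x : ℝ | x ∈ Set.Icc (0:ℝ) 1 ∧
          0 < ∫ t in (0:ℝ)..x, (Ghat t - G t)} →
      (∫ x in (0:ℝ)..1, (Ghat x) ^ n) < (∫ x in (0:ℝ)..1, (G x) ^ n)) := by
  have hG : ∀ x ∈ Icc (0:ℝ) 1, 0 ≤ G x := fun x hx => (hG01 x hx).1
  have key := integral_pow_sub_integral_pow_eq (n := n) hG (fun x hx => (hGhat01 x hx).1) hMean
  have hnonneg : 0 ≤ ∫ t in Ioc 0 1, (∫ x in (0:ℝ)..t, (Ghat x - G x))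
      ∂(Ghat.geomSum₂ G n).measure :=
    setIntegral_nonneg measurableSet_Ioc fun t ht => hMPS t (Ioc_subset_Icc_self ht)
  refine ⟨by linarith, fun hn2 hpos => ?_⟩
  linarith [setIntegral_primitive_pos hn2 hG hMPS hMean hpos]

/-- If `Ĝ` is a mean-preserving spread of the CDF `G` on `[0,1]`,
then `∫₀¹ Ĝ(x)ⁿ dx ≤ ∫₀¹ G(x)ⁿ dx`; the inequality is strict when `n ≥ 2` and
`∫₀ˣ (Ĝ − G) > 0` on a set of positive measure under the measure induced by `G`. -/
theorem stmt0 (n : ℕ) (hn : 1 ≤ n) (G Ghat : StieltjesFunction ℝ)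
    (hG01 : ∀ x ∈ Set.Icc (0:ℝ) 1, G x ∈ Set.Icc (0:ℝ) 1)
    (hGhat01 : ∀ x ∈ Set.Icc (0:ℝ) 1, Ghat x ∈ Set.Icc (0:ℝ) 1)
    (hG1 : G 1 = 1) (hGhat1 : Ghat 1 = 1)
    (hMPS : ∀ x ∈ Set.Icc (0:ℝ) 1, 0 ≤ ∫ t in (0:ℝ)..x, (Ghat t - G t))
    (hMean : (∫ t in (0:ℝ)..1, (Ghat t - G t)) = 0) :
    (∫ x in (0:ℝ)..1, (Ghat x) ^ n) ≤ (∫ x in (0:ℝ)..1, (G x) ^ n) ∧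
    (2 ≤ n →
      0 < G.measure {x : ℝ | x ∈ Set.Icc (0:ℝ) 1 ∧
          0 < ∫ t in (0:ℝ)..x, (Ghat t - G t)} →
      (∫ x in (0:ℝ)..1, (Ghat x) ^ n) < (∫ x in (0:ℝ)..1, (G x) ^ n)) :=
  stmt0_general n G Ghat hG01 hGhat01 hMPS hMean
end

section
/- Fix p ∈ (0,1). Consider maximizing (1−k)θ² over pairs (k,θ) ∈ [0,1] × [0,1] satisfying the constraint k + (1−k)h(θ) = p. The maximum is attained uniquely at k = 0 and θ = h⁻¹(p); in particular, every feasible pair (k,θ) with k > 0 satisfies (1−k)θ² < (h⁻¹(p))². -/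
/-!
On the constraint set `(1 - k) (1 - h θ) = 1 - p`, so the objective equals `(1 - p) / G θ`
with `G t = (1 - h t) / t²`, and `θp² = (1 - p) / G θp`. The constraint also gives
`h θ ≤ p = h θp`, i.e. `θp ≤ θ`, with equality only if `k = 0`. Everything therefore reduces
to `G` being strictly increasing on `(0, 1]`: the numerator of `G'` is
`t (-t log (1 - t) - 2 (1 - h t))`, and with `u = 1 - t` its positivity is the classical
bound `(1 + u) log u < 2 (u - 1)` for `0 < u < 1`.
-/

/-- `h(θ) = (1−θ)(1−log(1−θ))`; note that `Real.log 0 = 0` in Lean, so `h 1 = 0`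
automatically, matching the convention `h(1) = 0`. -/
noncomputable def h (θ : ℝ) : ℝ := (1 - θ) * (1 - Real.log (1 - θ))

open Real Set

lemma h_zero : h 0 = 1 := by simp [h]

lemma continuous_h : Continuous h := by
  have : h = fun θ ↦ (1 - θ) - (1 - θ) * log (1 - θ) := by
    funext θ; simp only [h]; ring
  rw [this]
  fun_prop

lemma hasDerivAt_h {x : ℝ} (hx : x < 1) : HasDerivAt h (log (1 - x)) x := by
  have hu : HasDerivAt (fun t : ℝ ↦ 1 - t) (-1) x := by
    simpa using (hasDerivAt_id x).const_sub 1
  have hx' : 1 - x ≠ 0 := by linarith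
  refine (hu.fun_mul ((hu.log hx').const_sub 1)).congr_deriv ?_
  field_simp
  ring

lemma strictAntiOn_h : StrictAntiOn h (Icc 0 1) := by
  refine strictAntiOn_of_deriv_neg (convex_Icc 0 1) continuous_h.continuousOn fun x hx ↦ ?_
  rw [interior_Icc] at hx
  rw [(hasDerivAt_h hx.2).deriv]
  exact log_neg (by linarith [hx.2]) (by linarith [hx.1])

lemma add_one_mul_log_lt {u : ℝ} (h0 : 0 < u) (h1 : u < 1) : (u + 1) * log u < 2 * (u - 1) := by
  have hx : 0 < u⁻¹ - 1 := by rw [sub_pos]; exact one_lt_inv_iff₀.2 ⟨h0, h1⟩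
  have := lt_log_one_add_of_pos hx
  have e : 2 * (u⁻¹ - 1) / (u⁻¹ - 1 + 2) = 2 * (1 - u) / (u + 1) := by
    field_simp
    rw [show 1 - u + 2 * u = u + 1 by ring, mul_div_cancel_right₀ _ (by linarith)]
  rw [add_sub_cancel, log_inv, e, div_lt_iff₀ (by linarith)] at this
  linarith

lemma two_mul_one_sub_h_lt {θ : ℝ} (h0 : 0 < θ) (h1 : θ < 1) :
    2 * (1 - h θ) < -θ * log (1 - θ) := by
  have := add_one_mul_log_lt (u := 1 - θ) (by linarith) (by linarith)
  unfold h
  linear_combination this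

lemma strictMonoOn_one_sub_h_div_sq : StrictMonoOn (fun t ↦ (1 - h t) / t ^ 2) (Ioc 0 1) := by
  refine strictMonoOn_of_deriv_pos (convex_Ioc 0 1) ?_ fun x hx ↦ ?_
  · exact (continuous_const.sub continuous_h).continuousOn.div (by fun_prop)
      fun x hx ↦ pow_ne_zero 2 hx.1.ne'
  rw [interior_Ioc] at hx
  obtain ⟨hx0, hx1⟩ := hx
  have hd : HasDerivAt (fun t ↦ (1 - h t) / t ^ 2)
      ((-log (1 - x) * x ^ 2 - (1 - h x) * (2 * x)) / (x ^ 2) ^ 2) x := by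
    simpa using ((hasDerivAt_h hx1).const_sub 1).fun_div (hasDerivAt_pow 2 x) (pow_ne_zero 2 hx0.ne')
  rw [hd.deriv]
  have := two_mul_one_sub_h_lt hx0 hx1
  apply div_pos _ (by positivity)
  nlinarith

/-- For prior mean `p ∈ (0,1)`, the maximum of `(1−k)θ²` over
`(k,θ) ∈ [0,1]²` with `k + (1−k)h(θ) = p` is attained uniquely at `k = 0`,
`θ = h⁻¹(p)` (here `θp` with `h θp = p`); in particular every feasible pair with
`k > 0` gives a strictly smaller value. -/
theorem stmt1 (p : ℝ) (hp : p ∈ Set.Ioo (0:ℝ) 1)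
    (θp : ℝ) (hθp : θp ∈ Set.Icc (0:ℝ) 1) (hθph : h θp = p) :
    ∀ k ∈ Set.Icc (0:ℝ) 1, ∀ θ ∈ Set.Icc (0:ℝ) 1,
      k + (1 - k) * h θ = p →
      (1 - k) * θ ^ 2 ≤ (1 - 0) * θp ^ 2 ∧
      ((k, θ) ≠ (0, θp) → (1 - k) * θ ^ 2 < θp ^ 2) := by
  intro k hk θ hθ hcon
  obtain ⟨hp0, hp1⟩ := hp
  have hθp0 : 0 < θp := hθp.1.lt_of_ne (by rintro rfl; rw [h_zero] at hθph; linarith)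
  have hk1 : k < 1 := hk.2.lt_of_ne (by rintro rfl; linarith)
  have hθ0 : 0 < θ := hθ.1.lt_of_ne (by rintro rfl; rw [h_zero] at hcon; linarith)
  have hfeas : (1 - k) * (1 - h θ) = 1 - p := by linear_combination -hcon
  have hhθ : 0 < 1 - h θ := pos_of_mul_pos_right (hfeas ▸ sub_pos.2 hp1) (by linarith)
  have hle : θp ≤ θ := by
    rw [← strictAntiOn_h.le_iff_ge hθ hθp, hθph]
    nlinarith [mul_nonneg hk.1 hhθ.le]
  set G := fun t ↦ (1 - h t) / t ^ 2
  have hval : (1 - k) * θ ^ 2 = (1 - p) / G θ := by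
    simp only [G]
    rw [← hfeas]
    field_simp
  have hvalp : θp ^ 2 = (1 - p) / G θp := by
    simp only [G]
    rw [hθph]
    field_simp
  have hGpos : 0 < G θp := by
    simp only [G]
    rw [hθph]
    exact div_pos (by linarith) (by positivity)
  constructor
  · rw [sub_zero, one_mul, hval, hvalp]
    exact div_le_div_of_nonneg_left (by linarith) hGpos
      (strictMonoOn_one_sub_h_div_sq.monotoneOn ⟨hθp0, hθp.2⟩ ⟨hθ0, hθ.2⟩ hle)
  · intro hne
    have hlt : θp < θ := hle.lt_of_ne fun heq ↦ hne <| by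
      subst heq
      have : k * (1 - p) = 0 := by linear_combination hcon - (1 - k) * hθph
      simp [(mul_eq_zero.1 this).resolve_right (by linarith)]
    rw [hval, hvalp]
    exact div_lt_div_of_pos_left (by linarith) hGpos
      (strictMonoOn_one_sub_h_div_sq ⟨hθp0, hθp.2⟩ ⟨hθ0, hθ.2⟩ hlt)
end

section
/- Fix an integer n ≥ 3 and define I_n(θ) = θ·log(1−θ) + n(θ + (1−θ)log(1−θ)) for θ ∈ (0,1). Then I_n has exactly one zero θ* in (0,1); moreover I_n(θ) > 0 for θ ∈ (0,θ*), I_n(θ) < 0 for θ ∈ (θ*,1), and θ* > (n−2)/(n−1). -/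
/-!
Writing `D(θ) = n − (n−1)θ`, which is `≥ 1` on `[0,1)`, we have `I_n = D · h` with
`h(θ) = log(1−θ) + nθ / D(θ)` (this is `reducedI n`). Since
`h'(θ) = θ((n−1)²(1−θ) − 1) / (D²(1−θ))`, the function `h` vanishes at `0`, increases up to
`c = 1 − 1/(n−1)²` and then decreases, tending to `−∞` at `1`. So `h`, hence `I_n`, changes sign
exactly once in `(0,1)`, at a point beyond `c > (n−2)/(n−1)`.
-/

/-- `I_n(θ) = θ·log(1−θ) + n(θ + (1−θ)·log(1−θ))`. -/
noncomputable def I (n : ℕ) (θ : ℝ) : ℝ :=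
  θ * Real.log (1 - θ) + n * (θ + (1 - θ) * Real.log (1 - θ))

open Real Set

theorem exists_zero_of_strictMonoOn_of_strictAntiOn {f : ℝ → ℝ} {a c b e : ℝ}
    (hac : a < c) (hcb : c < b) (hbe : b < e) (hf : ContinuousOn f (Icc c b))
    (hfa : f a = 0) (hb : f b < 0)
    (hmono : StrictMonoOn f (Icc a c)) (hanti : StrictAntiOn f (Ico c e)) :
    ∃ z ∈ Ioo c b, f z = 0 ∧ (∀ x ∈ Ioo a z, 0 < f x) ∧ ∀ x ∈ Ioo z e, f x < 0 := by
  have hc : 0 < f c := hfa ▸ hmono (left_mem_Icc.2 hac.le) (right_mem_Icc.2 hac.le) hac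
  obtain ⟨z, ⟨hcz, hzb⟩, hz⟩ := intermediate_value_Ioo' hcb.le hf ⟨hb, hc⟩
  refine ⟨z, ⟨hcz, hzb⟩, hz, fun x ⟨hax, hxz⟩ => ?_, fun x ⟨hzx, hxe⟩ => ?_⟩
  · rcases le_or_gt x c with hxc | hcx
    · exact hfa ▸ hmono (left_mem_Icc.2 hac.le) ⟨hax.le, hxc⟩ hax
    · exact hz ▸ hanti ⟨hcx.le, hxz.trans (hzb.trans hbe)⟩ ⟨hcz.le, hzb.trans hbe⟩ hxz
  · exact hz ▸ hanti ⟨hcz.le, hzb.trans hbe⟩ ⟨(hcz.trans hzx).le, hxe⟩ hzx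

noncomputable def reducedI (a θ : ℝ) : ℝ := log (1 - θ) + a * θ / (a - (a - 1) * θ)

section reducedI

variable {a θ : ℝ}

theorem one_le_sub_mul (ha : 1 ≤ a) (hθ : θ ≤ 1) : 1 ≤ a - (a - 1) * θ := by
  nlinarith

theorem I_eq_mul_reducedI {n : ℕ} (hn : 1 ≤ n) (hθ : θ ≤ 1) :
    I n θ = (n - (n - 1) * θ) * reducedI n θ := by
  have hD := one_le_sub_mul (a := n) (by exact_mod_cast hn) hθ
  rw [reducedI, mul_add, mul_div_cancel₀ _ (by positivity), I]
  ring

theorem continuousOn_reducedI (ha : 1 ≤ a) : ContinuousOn (reducedI a) (Iio 1) := by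
  refine ((continuousOn_const.sub continuousOn_id).log fun x hx => ?_).add
    ((continuousOn_const.mul continuousOn_id).div
      (continuousOn_const.sub (continuousOn_const.mul continuousOn_id)) fun x hx => ?_)
  · exact (sub_pos.2 hx).ne'
  · exact (zero_lt_one.trans_le (one_le_sub_mul ha (le_of_lt hx))).ne'

theorem hasDerivAt_reducedI (ha : 1 ≤ a) (hθ : θ < 1) :
    HasDerivAt (reducedI a)
      (θ * ((a - 1) ^ 2 * (1 - θ) - 1) / ((a - (a - 1) * θ) ^ 2 * (1 - θ))) θ := by
  have hD : a - (a - 1) * θ ≠ 0 := (zero_lt_one.trans_le (one_le_sub_mul ha hθ.le)).ne'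
  have h1θ : 1 - θ ≠ 0 := (sub_pos.2 hθ).ne'
  refine ((((hasDerivAt_id θ).const_sub 1).log h1θ).add (((hasDerivAt_id θ).const_mul a).div
    (((hasDerivAt_id θ).const_mul (a - 1)).const_sub a) hD)).congr_deriv ?_
  simp only [id]
  rw [div_add_div _ _ h1θ (pow_ne_zero 2 hD), div_eq_div_iff (by positivity) (by positivity)]
  ring

theorem strictMonoOn_reducedI (ha : 1 < a) :
    StrictMonoOn (reducedI a) (Icc 0 (1 - ((a - 1) ^ 2)⁻¹)) := by
  have hsq : 0 < (a - 1) ^ 2 := pow_pos (sub_pos.2 ha) 2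
  have hc : 1 - ((a - 1) ^ 2)⁻¹ < 1 := sub_lt_self 1 (inv_pos.2 hsq)
  refine strictMonoOn_of_deriv_pos (convex_Icc _ _)
    ((continuousOn_reducedI ha.le).mono fun x hx => hx.2.trans_lt hc) fun x hx => ?_
  rw [interior_Icc] at hx
  have hx1 : x < 1 := hx.2.trans hc
  rw [(hasDerivAt_reducedI ha.le hx1).deriv]
  have hnum : 1 < (a - 1) ^ 2 * (1 - x) := by
    rw [← inv_mul_lt_iff₀ hsq, mul_one]
    linarith [hx.2]
  have hD := one_le_sub_mul ha.le hx1.le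
  exact div_pos (mul_pos hx.1 (by linarith)) (mul_pos (pow_pos (by linarith) 2) (by linarith))

theorem strictAntiOn_reducedI (ha : 2 ≤ a) :
    StrictAntiOn (reducedI a) (Ico (1 - ((a - 1) ^ 2)⁻¹) 1) := by
  have hsq : 1 ≤ (a - 1) ^ 2 := one_le_pow₀ (by linarith)
  have hc : 0 ≤ 1 - ((a - 1) ^ 2)⁻¹ := sub_nonneg.2 (inv_le_one_of_one_le₀ hsq)
  refine strictAntiOn_of_deriv_neg (convex_Ico _ _)
    ((continuousOn_reducedI (by linarith)).mono fun x hx => hx.2) fun x hx => ?_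
  rw [interior_Ico] at hx
  rw [(hasDerivAt_reducedI (by linarith) hx.2).deriv]
  have hnum : (a - 1) ^ 2 * (1 - x) < 1 := by
    rw [← lt_inv_mul_iff₀ (by positivity), mul_one]
    linarith [hx.1]
  have hD := one_le_sub_mul (a := a) (by linarith) hx.2.le
  exact div_neg_of_neg_of_pos (mul_neg_of_pos_of_neg (hc.trans_lt hx.1) (by linarith))
    (mul_pos (pow_pos (by linarith) 2) (by linarith [hx.2]))

theorem reducedI_neg (ha : 1 ≤ a) (hθ : 1 - exp (-a) < θ) (hθ1 : θ < 1) :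
    reducedI a θ < 0 := by
  have hlog : log (1 - θ) < -a := by
    rw [← log_exp (-a)]
    exact log_lt_log (by linarith) (by linarith)
  have hD := one_le_sub_mul ha hθ1.le
  have hfrac : a * θ / (a - (a - 1) * θ) ≤ a := by
    rw [div_le_iff₀ (by linarith)]
    nlinarith
  rw [reducedI]
  linarith

end reducedI

theorem sub_two_div_sub_one_lt {a : ℝ} (ha : 2 < a) :
    (a - 2) / (a - 1) < 1 - ((a - 1) ^ 2)⁻¹ := by
  have hinv : ((a - 1) ^ 2)⁻¹ < (a - 1)⁻¹ := inv_strictAnti₀ (by linarith) (by nlinarith)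
  have hdiv : (a - 2) / (a - 1) = 1 - (a - 1)⁻¹ := by
    have h1 : a - 1 ≠ 0 := by linarith
    rw [div_eq_iff h1, sub_mul, inv_mul_cancel₀ h1]
    ring
  linarith

/-- for `n ≥ 3`, `I_n` has exactly one zero `θ*` in `(0,1)`;
`I_n > 0` on `(0,θ*)`, `I_n < 0` on `(θ*,1)`, and `θ* > (n−2)/(n−1)`. -/
theorem stmt4 (n : ℕ) (hn : 3 ≤ n) :
    ∃ θstar ∈ Set.Ioo (0:ℝ) 1,
      I n θstar = 0 ∧
      (∀ θ ∈ Set.Ioo (0:ℝ) 1, I n θ = 0 → θ = θstar) ∧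
      (∀ θ ∈ Set.Ioo (0:ℝ) θstar, 0 < I n θ) ∧
      (∀ θ ∈ Set.Ioo θstar (1:ℝ), I n θ < 0) ∧
      ((n:ℝ) - 2) / ((n:ℝ) - 1) < θstar := by
  have ha : (3:ℝ) ≤ n := by exact_mod_cast hn
  set c : ℝ := 1 - (((n:ℝ) - 1) ^ 2)⁻¹
  set m := max c (1 - exp (-n))
  have hc : ((n:ℝ) - 2) / ((n:ℝ) - 1) < c := sub_two_div_sub_one_lt (by linarith)
  have hc0 : 0 < c := hc.trans_le' (div_nonneg (by linarith) (by linarith))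
  have hm1 : m < 1 :=
    max_lt (sub_lt_self 1 (inv_pos.2 (pow_pos (by linarith) 2))) (sub_lt_self 1 (exp_pos _))
  have hcm : c ≤ m := le_max_left _ _
  have hm : 1 - exp (-n) ≤ m := le_max_right _ _
  obtain ⟨z, ⟨hcz, hzb⟩, hz, hpos, hneg⟩ :=
    exists_zero_of_strictMonoOn_of_strictAntiOn (f := reducedI n) (b := (1 + m) / 2) hc0
      (by linarith) (by linarith)
      ((continuousOn_reducedI (by linarith)).mono fun x hx => mem_Iio.2 (by linarith [hx.2]))
      (by simp [reducedI]) (reducedI_neg (by linarith) (by linarith) (by linarith))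
      (strictMonoOn_reducedI (by linarith)) (strictAntiOn_reducedI (by linarith))
  have hI (θ : ℝ) (hθ : θ < 1) : I n θ = (n - (n - 1) * θ) * reducedI n θ :=
    I_eq_mul_reducedI (by omega) hθ.le
  have hD (θ : ℝ) (hθ : θ < 1) : 0 < (n:ℝ) - (n - 1) * θ :=
    one_pos.trans_le (one_le_sub_mul (by linarith) hθ.le)
  have hz1 : z < 1 := by linarith
  refine ⟨z, ⟨hc0.trans hcz, hz1⟩, by rw [hI z hz1, hz, mul_zero], fun θ hθ hIθ => ?_,
    fun θ hθ => ?_, fun θ hθ => ?_, hc.trans hcz⟩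
  · rw [hI θ hθ.2] at hIθ
    have hθz := (mul_eq_zero.1 hIθ).resolve_left (hD θ hθ.2).ne'
    rcases lt_trichotomy θ z with h | h | h
    · exact absurd hθz (hpos θ ⟨hθ.1, h⟩).ne'
    · exact h
    · exact absurd hθz (hneg θ ⟨h, hθ.2⟩).ne
  · rw [hI θ (hθ.2.trans hz1)]
    exact mul_pos (hD θ (hθ.2.trans hz1)) (hpos θ hθ)
  · rw [hI θ hθ.2]
    exact mul_neg_of_pos_of_neg (hD θ hθ.2) (hneg θ hθ)
end

section
/- Fix p ∈ (0,1). Consider minimizing kθ + (1−θ) over pairs (k,θ) ∈ [0,1) × [0,1] satisfying the constraint k + (1−k)h(θ) = p. The minimum is attained uniquely at k = 0 and θ = h⁻¹(p); equivalently, θ(1−k) is maximized uniquely at k = 0. -/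
open Real Set

lemma h_eq_add_negMulLog (θ : ℝ) : h θ = (1 - θ) + negMulLog (1 - θ) := by
  rw [h, negMulLog]
  ring

lemma strictConcaveOn_add_negMulLog :
    StrictConcaveOn ℝ (Ici 0) (fun x : ℝ => x + negMulLog x) :=
  (concaveOn_id (convex_Ici 0)).add_strictConcaveOn strictConcaveOn_negMulLog

lemma strictMonoOn_add_negMulLog : StrictMonoOn (fun x : ℝ => x + negMulLog x) (Icc 0 1) := by
  refine strictMonoOn_of_deriv_pos (convex_Icc 0 1) (by fun_prop) fun x hx => ?_
  rw [interior_Icc] at hx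
  have hderiv : HasDerivAt (fun x : ℝ => x + negMulLog x) (1 + (-log x - 1)) x :=
    (hasDerivAt_id' (x := x)).add (hasDerivAt_negMulLog hx.1.ne')
  rw [hderiv.deriv]
  linarith [log_neg hx.1 hx.2]

lemma add_mul_h_lt_h_mul {k θ : ℝ} (hk : k ∈ Ioo 0 1) (hθ : θ ∈ Ioc 0 1) :
    k + (1 - k) * h θ < h ((1 - k) * θ) := by
  have hconc := strictConcaveOn_add_negMulLog.2 (mem_Ici.2 zero_le_one)
    (mem_Ici.2 (sub_nonneg.2 hθ.2)) (by linarith [hθ.1] : (1 : ℝ) ≠ 1 - θ)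
    hk.1 (sub_pos.2 hk.2) (add_sub_cancel k 1)
  simp only [smul_eq_mul, negMulLog_one, add_zero, mul_one] at hconc
  rw [show k + (1 - k) * (1 - θ) = 1 - (1 - k) * θ by ring] at hconc
  rw [h_eq_add_negMulLog, h_eq_add_negMulLog]
  linarith

lemma mul_one_sub_lt_of_constraint {p θp k θ : ℝ} (hp : p < 1) (hθp : θp ∈ Icc 0 1)
    (hθph : h θp = p) (hk : k ∈ Ico 0 1) (hθ : θ ∈ Icc 0 1) (hcon : k + (1 - k) * h θ = p) :
    θ * (1 - k) ≤ θp ∧ ((k, θ) ≠ (0, θp) → θ * (1 - k) < θp) := by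
  rcases hk.1.eq_or_lt with rfl | hk0
  · have hθeq : θ = θp := strictAntiOn_h.injOn hθ hθp (by linarith)
    subst hθeq
    exact ⟨by linarith, fun hne => absurd rfl hne⟩
  have hθ0 : 0 < θ := by
    refine hθ.1.lt_of_ne fun hθ0 => ?_
    rw [← hθ0, h_zero] at hcon
    linarith
  have hmem : (1 - k) * θ ∈ Icc 0 1 :=
    ⟨mul_nonneg (by linarith [hk.2]) hθ.1, by nlinarith [hθ.2]⟩
  have hh : h θp < h ((1 - k) * θ) := by
    linarith [add_mul_h_lt_h_mul ⟨hk0, hk.2⟩ ⟨hθ0, hθ.2⟩]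
  have hlt : θ * (1 - k) < θp := by
    rw [mul_comm]
    exact (strictAntiOn_h.lt_iff_gt hθp hmem).1 hh
  exact ⟨hlt.le, fun _ => hlt⟩

/-- one-buyer (Roesler–Szentes) reduced problem.  For `p ∈ (0,1)`,
the minimum of `kθ + (1−θ)` over `(k,θ) ∈ [0,1) × [0,1]` with `k + (1−k)h(θ) = p`
is attained uniquely at `k = 0`, `θ = h⁻¹(p)`; equivalently `θ(1−k)` is maximized
uniquely at `k = 0`. -/
theorem stmt6 (p : ℝ) (hp : p ∈ Set.Ioo (0:ℝ) 1)
    (θp : ℝ) (hθp : θp ∈ Set.Icc (0:ℝ) 1) (hθph : h θp = p) :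
    ∀ k ∈ Set.Ico (0:ℝ) 1, ∀ θ ∈ Set.Icc (0:ℝ) 1,
      k + (1 - k) * h θ = p →
      (0 * θp + (1 - θp) ≤ k * θ + (1 - θ) ∧
        ((k, θ) ≠ (0, θp) → 0 * θp + (1 - θp) < k * θ + (1 - θ))) ∧
      (θ * (1 - k) ≤ θp * (1 - 0) ∧
        ((k, θ) ≠ (0, θp) → θ * (1 - k) < θp * (1 - 0))) := by
  intro k hk θ hθ hcon
  obtain ⟨hle, hlt⟩ := mul_one_sub_lt_of_constraint hp.2 hθp hθph hk hθ hcon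
  have hobj : k * θ + (1 - θ) = 1 - θ * (1 - k) := by ring
  simp only [zero_mul, zero_add, sub_zero, mul_one, hobj]
  exact ⟨⟨by linarith, fun hne => by linarith [hlt hne]⟩, hle, hlt⟩
end

section
/- Fix an integer n ≥ 2 and p ∈ (0,1). In the reduced buyer-optimal problem — maximize B(θ₀,k,θ) = n(1−k)(1−θ)(A(θ) − A(θ₀)) over triples (θ₀,k,θ) with 0 ≤ θ₀ ≤ θ < 1 and 0 ≤ k ≤ 1 subject to (1−k)(1−θ)(1 − log(1−θ) + log(1−θ₀)) + k(1−θ₀) = p — a maximizer exists, and every maximizer (θ₀,k,θ) satisfies k·θ₀ = 0; that is, at an optimum it is impossible that both the low virtual value k and the mass θ₀ on signal 0 are strictly positive. -/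
/-- `A(t) = −∑_{i=1}^{n−1} tⁱ/i − log(1−t)`. -/
noncomputable def A (n : ℕ) (t : ℝ) : ℝ :=
  -(∑ i ∈ Finset.Icc 1 (n - 1), t ^ i / (i : ℝ)) - Real.log (1 - t)

/-- Buyers' total surplus in the reduced buyer-optimal problem:
`B(θ₀,k,θ) = n(1−k)(1−θ)(A(θ) − A(θ₀))`. -/
noncomputable def B (n : ℕ) (θ₀ k θ : ℝ) : ℝ :=
  n * (1 - k) * (1 - θ) * (A n θ - A n θ₀)

/-- Feasibility for the reduced buyer-optimal problem:
`0 ≤ θ₀ ≤ θ < 1`, `0 ≤ k ≤ 1`, and the mean constraint. -/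
def Feasible (n : ℕ) (p θ₀ k θ : ℝ) : Prop :=
  0 ≤ θ₀ ∧ θ₀ ≤ θ ∧ θ < 1 ∧ 0 ≤ k ∧ k ≤ 1 ∧
    (1 - k) * (1 - θ) * (1 - Real.log (1 - θ) + Real.log (1 - θ₀)) +
      k * (1 - θ₀) = p

/-!
Near `θ = 1` every feasible point has small surplus: `A θ ≤ -log (1 - θ)` and `-y log y ≤ 2√y`
give `B ≤ 2n√(1 - θ)`. So a maximizer exists, found on the compact part `θ ≤ 1 - δ` of the
feasible set, and it has positive surplus.

If `k > 0` and `θ₀ > 0` at a point of positive surplus, lower `θ₀` slightly: this raises the mean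
(strictly decreasing in `θ₀`), and since the mean is affine in `k` and below `p` at `k = 0`, the
constraint is restored by a smaller `k`. Both moves raise `(1 - k) (A θ - A θ₀)`, hence `B`.
-/

open Real Set Filter Topology

lemma sum_Icc_pow_pred_eq_geom_sum (n : ℕ) (t : ℝ) :
    ∑ i ∈ Finset.Icc 1 (n - 1), t ^ (i - 1) = ∑ i ∈ Finset.range (n - 1), t ^ i := by
  rw [← Finset.Ico_add_one_right_eq_Icc, Finset.sum_Ico_eq_sum_range]
  simp

lemma hasDerivAt_A (n : ℕ) {t : ℝ} (ht : t ≠ 1) :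
    HasDerivAt (A n) (t ^ (n - 1) / (1 - t)) t := by
  have h1t : 1 - t ≠ 0 := sub_ne_zero.mpr ht.symm
  have hsum : HasDerivAt (fun s ↦ ∑ i ∈ Finset.Icc 1 (n - 1), s ^ i / (i : ℝ))
      (∑ i ∈ Finset.Icc 1 (n - 1), t ^ (i - 1)) t := by
    refine HasDerivAt.fun_sum fun i hi ↦ ?_
    have hi0 : (i : ℝ) ≠ 0 := by have := (Finset.mem_Icc.mp hi).1; positivity
    exact ((hasDerivAt_pow i t).div_const (i : ℝ)).congr_deriv (mul_div_cancel_left₀ _ hi0)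
  have hlog : HasDerivAt (fun s ↦ log (1 - s)) ((1 - t)⁻¹ * -1) t :=
    (hasDerivAt_log h1t).comp t ((hasDerivAt_id t).const_sub 1)
  refine (hsum.neg.sub hlog).congr_deriv ?_
  rw [sum_Icc_pow_pred_eq_geom_sum]
  field_simp
  linear_combination -geom_sum_mul_neg t (n - 1)

lemma continuousAt_A (n : ℕ) {t : ℝ} (ht : t ≠ 1) : ContinuousAt (A n) t :=
  (hasDerivAt_A n ht).continuousAt

@[simp]
lemma A_zero (n : ℕ) : A n 0 = 0 := by
  rw [A, Finset.sum_eq_zero fun i hi ↦ by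
    simp [Nat.one_le_iff_ne_zero.mp (Finset.mem_Icc.mp hi).1]]
  simp

lemma strictMonoOn_A (n : ℕ) : StrictMonoOn (A n) (Ico 0 1) := by
  refine strictMonoOn_of_deriv_pos (convex_Ico 0 1)
    (fun t ht ↦ (continuousAt_A n ht.2.ne).continuousWithinAt) fun t ht ↦ ?_
  rw [interior_Ico] at ht
  rw [(hasDerivAt_A n ht.2.ne).deriv]
  have : 0 < 1 - t := by linarith [ht.2]
  have := ht.1
  positivity

lemma A_le_neg_log (n : ℕ) {t : ℝ} (ht : 0 ≤ t) : A n t ≤ -log (1 - t) := by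
  have : 0 ≤ ∑ i ∈ Finset.Icc 1 (n - 1), t ^ i / (i : ℝ) := by positivity
  rw [A]
  linarith

lemma neg_mul_log_le_two_mul_sqrt {y : ℝ} (hy : 0 ≤ y) : -(y * log y) ≤ 2 * √y := by
  rcases hy.eq_or_lt with rfl | hy
  · simp
  have hs : 0 < √y := sqrt_pos.mpr hy
  have hlog : 1 - (√y)⁻¹ ≤ log √y := one_sub_inv_le_log_of_pos hs
  rw [log_sqrt hy.le] at hlog
  have : y * (√y)⁻¹ = √y := by rw [← div_eq_mul_inv, div_sqrt]
  nlinarith [sqrt_nonneg y]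

-- `Feasible n p θ₀ k θ` unfolds to the bounds together with `priorMean θ₀ k θ = p`.
noncomputable def priorMean (θ₀ k θ : ℝ) : ℝ :=
  (1 - k) * (1 - θ) * (1 - log (1 - θ) + log (1 - θ₀)) + k * (1 - θ₀)

lemma priorMean_eq_add_mul (θ₀ k θ : ℝ) :
    priorMean θ₀ k θ = priorMean θ₀ 0 θ + k * (1 - θ₀ - priorMean θ₀ 0 θ) := by
  unfold priorMean
  ring

lemma priorMean_zero_lt {θ₀ θ : ℝ} (hθ₀θ : θ₀ < θ) (hθ : θ < 1) :
    priorMean θ₀ 0 θ < 1 - θ₀ := by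
  have hy : 0 < 1 - θ := by linarith
  have hlog : log ((1 - θ₀) / (1 - θ)) < (1 - θ₀) / (1 - θ) - 1 :=
    log_lt_sub_one_of_pos (div_pos (by linarith) hy)
      (by rw [Ne, div_eq_one_iff_eq hy.ne']; linarith)
  rw [log_div (by linarith) hy.ne', lt_sub_iff_add_lt, lt_div_iff₀ hy] at hlog
  unfold priorMean
  linarith

lemma strictAntiOn_priorMean {k θ : ℝ} (hk : 0 < k) (hk1 : k ≤ 1) (hθ : θ ≤ 1) :
    StrictAntiOn (fun θ₀ ↦ priorMean θ₀ k θ) (Iio 1) := by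
  rintro a - b hb hab
  have hlog : log (1 - b) < log (1 - a) := log_lt_log (by linarith [mem_Iio.mp hb]) (by linarith)
  have : 0 ≤ (1 - k) * (1 - θ) := mul_nonneg (by linarith) (by linarith)
  simp only [priorMean]
  nlinarith

lemma exists_priorMean_eq {θ₀ k θ p : ℝ} (hk : 0 ≤ k) (hlow : priorMean θ₀ 0 θ < p)
    (hhigh : p < priorMean θ₀ k θ) : ∃ k' ∈ Ioo 0 k, priorMean θ₀ k' θ = p := by
  have hcont : Continuous fun k ↦ priorMean θ₀ k θ := by
    unfold priorMean
    fun_prop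
  exact intermediate_value_Ioo hk hcont.continuousOn ⟨hlow, hhigh⟩

lemma exists_lower_θ₀_k_priorMean_eq {θ₀ k θ : ℝ} (hθ₀ : 0 < θ₀) (hθ₀θ : θ₀ < θ)
    (hθ : θ < 1) (hk : 0 < k) (hk1 : k ≤ 1) :
    ∃ θ₀' ∈ Ico 0 θ₀, ∃ k' ∈ Ioo 0 k, priorMean θ₀' k' θ = priorMean θ₀ k θ := by
  have hlow : priorMean θ₀ 0 θ < priorMean θ₀ k θ := by
    rw [priorMean_eq_add_mul θ₀ k]
    nlinarith [priorMean_zero_lt hθ₀θ hθ]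
  have hcont : ContinuousAt (fun a ↦ priorMean a 0 θ) θ₀ := by
    have : 1 - θ₀ ≠ 0 := by linarith
    unfold priorMean
    fun_prop (disch := assumption)
  have hev : ∀ᶠ a in 𝓝[<] θ₀, 0 ≤ a ∧ priorMean a 0 θ < priorMean θ₀ k θ :=
    nhdsWithin_le_nhds ((eventually_ge_nhds hθ₀).and (hcont.eventually_lt_const hlow))
  obtain ⟨a, ⟨ha0, ha⟩, haθ₀⟩ := (hev.and self_mem_nhdsWithin).exists
  have hhigh : priorMean θ₀ k θ < priorMean a k θ :=
    strictAntiOn_priorMean hk hk1 hθ.le (mem_Iio.mpr (by linarith))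
      (mem_Iio.mpr (by linarith)) haθ₀
  exact ⟨a, ⟨ha0, haθ₀⟩, exists_priorMean_eq hk.le ha hhigh⟩

lemma exists_feasible_B_gt_of_pos {n : ℕ} {p θ₀ k θ : ℝ} (hf : Feasible n p θ₀ k θ)
    (hB : 0 < B n θ₀ k θ) (hk : 0 < k) (hθ₀ : 0 < θ₀) :
    ∃ θ₀' k', Feasible n p θ₀' k' θ ∧ B n θ₀ k θ < B n θ₀' k' θ := by
  obtain ⟨-, hθ₀θ, hθ, -, hk1, hmean⟩ := hf
  have hB_eq : ∀ a c, B n a c θ = (n * (1 - θ)) * ((1 - c) * (A n θ - A n a)) := by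
    intro a c
    unfold B
    ring
  simp only [hB_eq] at hB ⊢
  have hscale : 0 ≤ (n : ℝ) * (1 - θ) := mul_nonneg n.cast_nonneg (by linarith)
  have hD : 0 < A n θ - A n θ₀ :=
    pos_of_mul_pos_right (pos_of_mul_pos_right hB hscale) (by linarith)
  have hscale_pos : 0 < (n : ℝ) * (1 - θ) :=
    pos_of_mul_pos_left hB (mul_nonneg (by linarith) hD.le)
  have hθ₀θ' : θ₀ < θ := hθ₀θ.lt_of_ne (by rintro rfl; simp at hD)
  obtain ⟨θ₀', ⟨hθ₀'0, hθ₀'θ₀⟩, k', ⟨hk'0, hk'k⟩, hmean'⟩ :=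
    exists_lower_θ₀_k_priorMean_eq hθ₀ hθ₀θ' hθ hk hk1
  refine ⟨θ₀', k', ⟨hθ₀'0, by linarith, hθ, hk'0.le, by linarith, hmean'.trans hmean⟩,
    mul_lt_mul_of_pos_left ?_ hscale_pos⟩
  have hA : A n θ₀' < A n θ₀ :=
    strictMonoOn_A n ⟨hθ₀'0, by linarith⟩ ⟨hθ₀.le, by linarith⟩ hθ₀'θ₀
  calc (1 - k) * (A n θ - A n θ₀) < (1 - k') * (A n θ - A n θ₀) :=
        mul_lt_mul_of_pos_right (by linarith) hD
    _ ≤ (1 - k') * (A n θ - A n θ₀') := mul_le_mul_of_nonneg_left (by linarith) (by linarith)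

lemma exists_feasible_B_pos {n : ℕ} (hn : 0 < n) {p : ℝ} (hp : p ∈ Ioo 0 1) :
    ∃ θ₀ k θ, Feasible n p θ₀ k θ ∧ 0 < B n θ₀ k θ := by
  obtain ⟨hp0, hp1⟩ := hp
  -- `y (1 - log y) ≤ y + 2√y = p² / 16 + p / 2 < p`
  set y := (p / 4) ^ 2 with hy
  have hy0 : 0 < y := by positivity
  have hy1 : y < 1 := by nlinarith
  have hlow : priorMean 0 0 (1 - y) < p := by
    have hlog := neg_mul_log_le_two_mul_sqrt hy0.le
    rw [hy, sqrt_sq (by positivity), ← hy] at hlog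
    simp only [priorMean, sub_sub_cancel, sub_zero, log_one, one_mul, zero_mul, add_zero]
    nlinarith
  have hhigh : p < priorMean 0 1 (1 - y) := by simpa [priorMean] using hp1
  obtain ⟨k, ⟨hk0, hk1⟩, hk⟩ := exists_priorMean_eq zero_le_one hlow hhigh
  refine ⟨0, k, 1 - y, ⟨le_rfl, by linarith, by linarith, hk0.le, hk1.le, hk⟩, ?_⟩
  have hA : A n 0 < A n (1 - y) :=
    strictMonoOn_A n ⟨le_rfl, one_pos⟩ ⟨by linarith, by linarith⟩ (by linarith)
  exact mul_pos (mul_pos (mul_pos (Nat.cast_pos.mpr hn) (by linarith)) (by linarith))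
    (sub_pos.mpr hA)

lemma continuousAt_priorMean {q : ℝ × ℝ × ℝ} (h₀ : q.1 ≠ 1) (h : q.2.2 ≠ 1) :
    ContinuousAt (fun q : ℝ × ℝ × ℝ ↦ priorMean q.1 q.2.1 q.2.2) q := by
  have : 1 - q.1 ≠ 0 := sub_ne_zero.mpr h₀.symm
  have : 1 - q.2.2 ≠ 0 := sub_ne_zero.mpr h.symm
  unfold priorMean
  fun_prop (disch := assumption)

lemma continuousAt_B (n : ℕ) {q : ℝ × ℝ × ℝ} (h₀ : q.1 ≠ 1) (h : q.2.2 ≠ 1) :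
    ContinuousAt (fun q : ℝ × ℝ × ℝ ↦ B n q.1 q.2.1 q.2.2) q := by
  have : ContinuousAt (fun q : ℝ × ℝ × ℝ ↦ A n q.1) q :=
    (continuousAt_A n h₀).comp continuousAt_fst
  have : ContinuousAt (fun q : ℝ × ℝ × ℝ ↦ A n q.2.2) q :=
    ContinuousAt.comp (f := fun q : ℝ × ℝ × ℝ ↦ q.2.2) (continuousAt_A n h) (by fun_prop)
  unfold B
  fun_prop

lemma isCompact_feasible_of_le (n : ℕ) (p : ℝ) {c : ℝ} (hc : c < 1) :
    IsCompact {q : ℝ × ℝ × ℝ | Feasible n p q.1 q.2.1 q.2.2 ∧ q.2.2 ≤ c} := by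
  set C := {q : ℝ × ℝ × ℝ | 0 ≤ q.1 ∧ q.1 ≤ q.2.2 ∧ q.2.2 ≤ c ∧ 0 ≤ q.2.1 ∧ q.2.1 ≤ 1}
  have hC : IsClosed C := by
    simp only [C, ofPred_and]
    refine (isClosed_le ?_ ?_).inter ((isClosed_le ?_ ?_).inter ((isClosed_le ?_ ?_).inter
      ((isClosed_le ?_ ?_).inter (isClosed_le ?_ ?_)))) <;> fun_prop
  have hmean : ContinuousOn (fun q : ℝ × ℝ × ℝ ↦ priorMean q.1 q.2.1 q.2.2) C := by
    rintro q ⟨-, h₀, hθ, -, -⟩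
    exact (continuousAt_priorMean (by linarith) (by linarith)).continuousWithinAt
  have hK : {q : ℝ × ℝ × ℝ | Feasible n p q.1 q.2.1 q.2.2 ∧ q.2.2 ≤ c} =
      C ∩ (fun q : ℝ × ℝ × ℝ ↦ priorMean q.1 q.2.1 q.2.2) ⁻¹' {p} := by
    ext q
    simp only [Feasible, C, mem_ofPred_eq, mem_inter_iff, mem_preimage, mem_singleton_iff]
    constructor
    · rintro ⟨⟨h1, h2, -, h4, h5, h6⟩, h3⟩
      exact ⟨⟨h1, h2, h3, h4, h5⟩, h6⟩
    · rintro ⟨⟨h1, h2, h3, h4, h5⟩, h6⟩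
      exact ⟨⟨h1, h2, by linarith, h4, h5, h6⟩, h3⟩
  rw [hK]
  refine (isCompact_Icc (a := ((0 : ℝ), (0 : ℝ), (0 : ℝ))) (b := (1, 1, 1))).of_isClosed_subset
    (hmean.preimage_isClosed_of_isClosed hC isClosed_singleton) ?_
  rintro q ⟨⟨h1, h2, h3, h4, h5⟩, -⟩
  exact ⟨⟨h1, h4, by linarith⟩, ⟨by linarith, h5, by linarith⟩⟩

lemma B_le_two_mul_sqrt {n : ℕ} {p θ₀ k θ : ℝ} (hf : Feasible n p θ₀ k θ) :
    B n θ₀ k θ ≤ 2 * n * √(1 - θ) := by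
  obtain ⟨hθ₀, hθ₀θ, hθ, hk, hk1, -⟩ := hf
  have hA₀ : 0 ≤ A n θ₀ := by
    simpa using (strictMonoOn_A n).monotoneOn ⟨le_rfl, one_pos⟩ ⟨hθ₀, by linarith⟩ hθ₀
  have hA : A n θ₀ ≤ A n θ :=
    (strictMonoOn_A n).monotoneOn ⟨hθ₀, by linarith⟩ ⟨by linarith, hθ⟩ hθ₀θ
  have hlog := neg_mul_log_le_two_mul_sqrt (by linarith : 0 ≤ 1 - θ)
  have hAlog := A_le_neg_log n (by linarith : 0 ≤ θ)
  have hsurplus : (1 - θ) * (A n θ - A n θ₀) ≤ 2 * √(1 - θ) := by nlinarith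
  have : 0 ≤ (1 - θ) * (A n θ - A n θ₀) := mul_nonneg (by linarith) (by linarith)
  calc B n θ₀ k θ = n * (1 - k) * ((1 - θ) * (A n θ - A n θ₀)) := by unfold B; ring
    _ ≤ n * 1 * (2 * √(1 - θ)) := by gcongr; linarith
    _ = 2 * n * √(1 - θ) := by ring

lemma exists_isMax_B {n : ℕ} {p θ₀₁ k₁ θ₁ : ℝ} (h₁ : Feasible n p θ₀₁ k₁ θ₁)
    (hB₁ : 0 < B n θ₀₁ k₁ θ₁) :
    ∃ θ₀ k θ, Feasible n p θ₀ k θ ∧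
      ∀ θ₀' k' θ', Feasible n p θ₀' k' θ' → B n θ₀' k' θ' ≤ B n θ₀ k θ := by
  set B₁ := B n θ₀₁ k₁ θ₁
  have hn : 0 < 2 * (n : ℝ) := pos_of_mul_pos_left (hB₁.trans_le (B_le_two_mul_sqrt h₁))
    (sqrt_nonneg _)
  set δ := (B₁ / (2 * n)) ^ 2
  have hδ : 0 < δ := pow_pos (div_pos hB₁ hn) 2
  have hsmall : ∀ θ₀ k θ, Feasible n p θ₀ k θ → 1 - θ < δ → B n θ₀ k θ < B₁ := by
    intro θ₀ k θ hf hθ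
    calc B n θ₀ k θ ≤ 2 * n * √(1 - θ) := B_le_two_mul_sqrt hf
      _ < 2 * n * √δ := by gcongr; linarith [hf.2.2.1]
      _ = B₁ := by rw [sqrt_sq (div_pos hB₁ hn).le, mul_div_cancel₀ _ hn.ne']
  have hθ₁ : θ₁ ≤ 1 - δ := by
    by_contra h
    exact (hsmall _ _ _ h₁ (by linarith)).false
  set K := {q : ℝ × ℝ × ℝ | Feasible n p q.1 q.2.1 q.2.2 ∧ q.2.2 ≤ 1 - δ}
  have hBcont : ContinuousOn (fun q : ℝ × ℝ × ℝ ↦ B n q.1 q.2.1 q.2.2) K := fun q hq ↦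
    (continuousAt_B n (by linarith [hq.1.2.1, hq.1.2.2.1]) hq.1.2.2.1.ne).continuousWithinAt
  obtain ⟨q, ⟨hq, -⟩, hmax⟩ :=
    (isCompact_feasible_of_le n p (by linarith : 1 - δ < 1)).exists_isMaxOn
      ⟨(θ₀₁, k₁, θ₁), h₁, hθ₁⟩ hBcont
  rw [isMaxOn_iff] at hmax
  refine ⟨q.1, q.2.1, q.2.2, hq, fun θ₀ k θ hf ↦ ?_⟩
  by_cases hθ : θ ≤ 1 - δ
  · exact hmax (θ₀, k, θ) ⟨hf, hθ⟩
  · exact ((hsmall _ _ _ hf (by linarith)).trans_le (hmax (θ₀₁, k₁, θ₁) ⟨h₁, hθ₁⟩)).le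

/-- for `n ≥ 2` and `p ∈ (0,1)`, the reduced buyer-optimal problem
has a maximizer, and every maximizer `(θ₀,k,θ)` satisfies `k·θ₀ = 0`. -/
theorem stmt10 (n : ℕ) (hn : 2 ≤ n) (p : ℝ) (hp : p ∈ Set.Ioo (0:ℝ) 1) :
    (∃ θ₀ k θ : ℝ, Feasible n p θ₀ k θ ∧
      ∀ θ₀' k' θ' : ℝ, Feasible n p θ₀' k' θ' →
        B n θ₀' k' θ' ≤ B n θ₀ k θ) ∧
    (∀ θ₀ k θ : ℝ, Feasible n p θ₀ k θ →
      (∀ θ₀' k' θ' : ℝ, Feasible n p θ₀' k' θ' →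
        B n θ₀' k' θ' ≤ B n θ₀ k θ) →
      k * θ₀ = 0) := by
  obtain ⟨θ₀₁, k₁, θ₁, h₁, hB₁⟩ := exists_feasible_B_pos (n := n) (by omega) hp
  refine ⟨exists_isMax_B h₁ hB₁, fun θ₀ k θ hf hmax ↦ ?_⟩
  by_contra hkθ₀
  obtain ⟨hk, hθ₀⟩ := mul_ne_zero_iff.mp hkθ₀
  obtain ⟨θ₀', k', hf', hlt⟩ := exists_feasible_B_gt_of_pos hf (hB₁.trans_le (hmax _ _ _ h₁))
    (hf.2.2.2.1.lt_of_ne' hk) (hf.1.lt_of_ne' hθ₀)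
  exact (hmax _ _ _ hf').not_gt hlt
end

section
/- Let G and H be CDFs on [0,1] such that H is a mean-preserving spread of G. Then ∫₀¹ (1−G(x))² dx ≥ ∫₀¹ (1−H(x))² dx. Equivalently, the expected revenue of a second-price auction with no reserve price and two i.i.d. bidders (which equals the expected minimum of the two values) is minimized, over all signal distributions G of which the prior H is a mean-preserving spread, by full revelation G = H. -/
/-!
Since `(1 - G)² - (1 - H)² = (H - G) * w` with `w = (1 - G) + (1 - H)` nonincreasing and
nonnegative, it suffices that `∫₀¹ f w ≥ 0` whenever every partial integral `∫₀ˣ f` is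
nonnegative and `w` is nonincreasing and nonnegative. Writing `w t = ∫₀^∞ 1{s < w t} ds` and
swapping the integrals turns `∫ f w` into an integral over `s` of integrals of `f` over the
superlevel sets `{w > s}`, which are initial segments of `(0, 1]` up to a null set.
-/

open MeasureTheory Set

theorem IsLowerSet.exists_inter_Ioc_ae_eq_Ioc {L : Set ℝ} (hL : IsLowerSet L) {a b : ℝ}
    (hab : a ≤ b) : ∃ c ∈ Icc a b, (L ∩ Ioc a b : Set ℝ) =ᵐ[volume] Ioc a c := by
  rcases (L ∩ Ioc a b).eq_empty_or_nonempty with hS | hS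
  · exact ⟨a, left_mem_Icc.2 hab, by simp [hS]⟩
  have hbdd : BddAbove (L ∩ Ioc a b) := bddAbove_Ioc.mono inter_subset_right
  refine ⟨sSup (L ∩ Ioc a b), ⟨?_, csSup_le hS fun t ht => ht.2.2⟩, ?_⟩
  · obtain ⟨t, ht⟩ := hS
    exact ht.2.1.le.trans (le_csSup hbdd ht)
  have hIoo : Ioo a (sSup (L ∩ Ioc a b)) ⊆ L ∩ Ioc a b := fun t ht => by
    obtain ⟨u, hu, htu⟩ := exists_lt_of_lt_csSup hS ht.2
    exact ⟨hL htu.le hu.1, ht.1, htu.le.trans hu.2.2⟩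
  have hIoc : L ∩ Ioc a b ⊆ Ioc a (sSup (L ∩ Ioc a b)) := fun t ht =>
    ⟨ht.2.1, le_csSup hbdd ht⟩
  exact hIoc.eventuallyLE.antisymm (Ioo_ae_eq_Ioc.symm.le.trans hIoo.eventuallyLE)

theorem integral_indicator_Ico_zero_const {r : ℝ} (hr : 0 ≤ r) (c : ℝ) :
    ∫ s, (Ico 0 r).indicator (fun _ => c) s = r * c := by
  rw [integral_indicator_const _ measurableSet_Ico, Real.volume_real_Ico_of_le hr, sub_zero,
    smul_eq_mul]

theorem setIntegral_mul_antitone_nonneg {f w : ℝ → ℝ} {a b : ℝ} (hab : a ≤ b)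
    (hf : IntegrableOn f (Ioc a b)) (hw : Antitone w) (hwb : 0 ≤ w b)
    (hF : ∀ x ∈ Icc a b, 0 ≤ ∫ t in Ioc a x, f t) :
    0 ≤ ∫ t in Ioc a b, f t * w t := by
  set μ := volume.restrict (Ioc a b)
  set A : Set (ℝ × ℝ) := {p | 0 ≤ p.2 ∧ p.2 < w p.1}
  set g : ℝ × ℝ → ℝ := A.indicator fun p => f p.1
  have hA : MeasurableSet A :=
    (measurableSet_le measurable_const measurable_snd).inter
      (measurableSet_lt measurable_snd (hw.measurable.comp measurable_fst))
  have hw0 : ∀ᵐ t ∂μ, 0 ≤ w t :=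
    (ae_restrict_iff' measurableSet_Ioc).2 (.of_forall fun t ht => hwb.trans (hw ht.2))
  have slice_left (t : ℝ) : (fun s => g (t, s)) = (Ico 0 (w t)).indicator fun _ => f t := by
    ext s; simp only [g, A, indicator_apply, mem_ofPred_eq, mem_Ico]
  have slice_right (s : ℝ) : (fun t => g (t, s)) = {t | 0 ≤ s ∧ s < w t}.indicator f := by
    ext t; simp only [g, A, indicator_apply, mem_ofPred_eq]
  have norm_slice_left (t : ℝ) :
      (fun s => ‖g (t, s)‖) = (Ico 0 (w t)).indicator fun _ => ‖f t‖ := by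
    ext s; rw [← norm_indicator_eq_indicator_norm, ← slice_left]
  have hfw : Integrable (fun t => ‖f t‖ * w t) μ := by
    refine (hf.norm.mul_const (w a)).mono'
      (hf.aestronglyMeasurable.norm.mul hw.measurable.aestronglyMeasurable) ?_
    filter_upwards [hw0, ae_restrict_mem measurableSet_Ioc] with t ht hmem
    rw [Real.norm_of_nonneg (mul_nonneg (norm_nonneg _) ht)]
    exact mul_le_mul_of_nonneg_left (hw hmem.1.le) (norm_nonneg _)
  have hg : Integrable g (μ.prod volume) := by
    refine (integrable_prod_iff ((hf.aestronglyMeasurable.comp_fst).indicator hA)).2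
      ⟨.of_forall fun t => ?_, hfw.congr ?_⟩
    · rw [slice_left, integrable_indicator_iff measurableSet_Ico]
      exact integrableOn_const measure_Ico_lt_top.ne
    · filter_upwards [hw0] with t ht
      rw [norm_slice_left, integral_indicator_Ico_zero_const ht, mul_comm]
  have inner_left : ∀ᵐ t ∂μ, ∫ s, g (t, s) = f t * w t := by
    filter_upwards [hw0] with t ht
    rw [slice_left, integral_indicator_Ico_zero_const ht, mul_comm]
  have inner_right (s : ℝ) : 0 ≤ ∫ t, g (t, s) ∂μ := by
    have hL : IsLowerSet {t | 0 ≤ s ∧ s < w t} := fun x y hyx hx =>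
      ⟨hx.1, hx.2.trans_le (hw hyx)⟩
    obtain ⟨c, hc, hLc⟩ := hL.exists_inter_Ioc_ae_eq_Ioc hab
    rw [slice_right, integral_indicator hL.ordConnected.measurableSet,
      Measure.restrict_restrict hL.ordConnected.measurableSet, setIntegral_congr_set hLc]
    exact hF c hc
  calc (0 : ℝ) ≤ ∫ s, ∫ t, g (t, s) ∂μ := integral_nonneg inner_right
    _ = ∫ t, ∫ s, g (t, s) ∂volume ∂μ :=
      (integral_integral_swap (f := fun t s => g (t, s)) hg).symm
    _ = ∫ t in Ioc a b, f t * w t := integral_congr_ae inner_left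

theorem intervalIntegral.integral_mul_antitoneOn_nonneg {f w : ℝ → ℝ} {a b : ℝ}
    (hab : a ≤ b) (hf : IntervalIntegrable f volume a b) (hw : AntitoneOn w (Icc a b))
    (hwb : 0 ≤ w b) (hF : ∀ x ∈ Icc a b, 0 ≤ ∫ t in a..x, f t) :
    0 ≤ ∫ t in a..b, f t * w t := by
  set w' := IccExtend hab ((Icc a b).domRestrict w)
  have hw' : Antitone w' := (antitoneOn_iff_antitone.1 hw).comp_monotone (monotone_projIcc hab)
  have hww' : ∀ t ∈ Ioc a b, f t * w t = f t * w' t := fun t ht => by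
    rw [show w' t = w t from IccExtend_of_mem hab _ (Ioc_subset_Icc_self ht)]
  rw [intervalIntegral.integral_of_le hab, setIntegral_congr_fun measurableSet_Ioc hww']
  refine setIntegral_mul_antitone_nonneg hab hf.1 hw' ?_ fun x hx => ?_
  · exact (IccExtend_right hab _).trans_ge hwb
  · rw [← intervalIntegral.integral_of_le hx.1]
    exact hF x hx

theorem antitoneOn_one_sub_sq {F : ℝ → ℝ} {s : Set ℝ} (hF : MonotoneOn F s)
    (hF1 : ∀ x ∈ s, F x ≤ 1) : AntitoneOn (fun x => (1 - F x) ^ 2) s :=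
  fun x hx y hy hxy => pow_le_pow_left₀ (sub_nonneg.2 (hF1 y hy)) (by linarith [hF hx hy hxy]) 2

theorem stmt15_general (G H : ℝ → ℝ)
    (hGmono : MonotoneOn G (Set.Icc (0:ℝ) 1))
    (hHmono : MonotoneOn H (Set.Icc (0:ℝ) 1))
    (hGrange : ∀ x ∈ Set.Icc (0:ℝ) 1, G x ∈ Set.Icc (0:ℝ) 1)
    (hHrange : ∀ x ∈ Set.Icc (0:ℝ) 1, H x ∈ Set.Icc (0:ℝ) 1)
    (hMPS : ∀ x ∈ Set.Icc (0:ℝ) 1, 0 ≤ ∫ t in (0:ℝ)..x, (H t - G t)) :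
    (∫ x in (0:ℝ)..1, (1 - H x) ^ 2) ≤ (∫ x in (0:ℝ)..1, (1 - G x) ^ 2) := by
  have hI : uIcc (0 : ℝ) 1 = Icc 0 1 := uIcc_of_le zero_le_one
  have hmem : (1 : ℝ) ∈ Icc 0 1 := right_mem_Icc.2 zero_le_one
  have hGsq := antitoneOn_one_sub_sq hGmono fun x hx => (hGrange x hx).2
  have hHsq := antitoneOn_one_sub_sq hHmono fun x hx => (hHrange x hx).2
  have hw : AntitoneOn (fun t => (1 - G t) + (1 - H t)) (Icc 0 1) := fun x hx y hy hxy => by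
    linarith [hGmono hx hy hxy, hHmono hx hy hxy]
  have key := intervalIntegral.integral_mul_antitoneOn_nonneg zero_le_one
    ((hI.symm ▸ hHmono).intervalIntegrable.sub (hI.symm ▸ hGmono).intervalIntegrable) hw
    (by linarith [(hGrange 1 hmem).2, (hHrange 1 hmem).2]) hMPS
  rw [← sub_nonneg, ← intervalIntegral.integral_sub (hI.symm ▸ hGsq).intervalIntegrable
    (hI.symm ▸ hHsq).intervalIntegrable]
  convert key using 3 with t
  ring

/-- if the prior `H` is a mean-preserving spread of the signal CDF
`G` on `[0,1]`, then `∫₀¹ (1−G)² ≥ ∫₀¹ (1−H)²`: the expected minimum of two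
i.i.d. draws (the revenue of a second-price auction with no reserve) is
minimized by full revelation `G = H`. -/
theorem stmt15 (G H : ℝ → ℝ)
    (hGmono : MonotoneOn G (Set.Icc (0:ℝ) 1))
    (hHmono : MonotoneOn H (Set.Icc (0:ℝ) 1))
    (hGrc : ∀ x ∈ Set.Ico (0:ℝ) 1, ContinuousWithinAt G (Set.Ici x) x)
    (hHrc : ∀ x ∈ Set.Ico (0:ℝ) 1, ContinuousWithinAt H (Set.Ici x) x)
    (hGrange : ∀ x ∈ Set.Icc (0:ℝ) 1, G x ∈ Set.Icc (0:ℝ) 1)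
    (hHrange : ∀ x ∈ Set.Icc (0:ℝ) 1, H x ∈ Set.Icc (0:ℝ) 1)
    (hG1 : G 1 = 1) (hH1 : H 1 = 1)
    (hMPS : ∀ x ∈ Set.Icc (0:ℝ) 1, 0 ≤ ∫ t in (0:ℝ)..x, (H t - G t))
    (hMean : (∫ t in (0:ℝ)..1, (H t - G t)) = 0) :
    (∫ x in (0:ℝ)..1, (1 - H x) ^ 2) ≤ (∫ x in (0:ℝ)..1, (1 - G x) ^ 2) :=
  stmt15_general G H hGmono hHmono hGrange hHrange hMPS
end

section
/- Let F : [0,1] → [0,1] be continuously differentiable and nondecreasing with F(1) = 1 and F(t) < 1 for all t ∈ [0,1). For k ∈ [0,1) define x(k) = k + (∫ₖ¹ (1−F(s)) ds)/(1−F(k)), and set x(1) = 1. Then ∫₀¹ x(k)·F′(k) dk = ∫₀¹ (1−F(k))·(1 − log(1−F(k)) + log(1−F(0))) dk. (This is the change-of-variable identity expressing the mean of the induced signal distribution in terms of the virtual value distribution F.) -/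
open Set MeasureTheory Filter Topology Real intervalIntegral

/-!
Write `G = 1 - F`, so that `x(k) = k + (∫ₖ¹ G) / G(k)`. The potential
`Ψ(k) = -k G(k) - (∫ₖ¹ G) (log G(k) - log G(0))` has derivative
`x(k) F'(k) - G(k) (1 - log G(k) + log G(0))` on `(0, 1)`, so the identity is the fundamental
theorem of calculus for `Ψ`, which vanishes at `0` and tends to `0` at `1`. The delicate term
at `1` is `(∫ₖ¹ G) log G(k) = ((∫ₖ¹ G) / G(k)) · G(k) log G(k)`: the mean residual
`(∫ₖ¹ G) / G(k)` lies in `[0, 1 - k]` because `G` is antitone, and `G log G → 0`.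
-/

/-- For `G = 1 - F` and `b = 1` this is `x(k) - k = E[φ - k | φ ≥ k]`. -/
noncomputable def meanResidual (G : ℝ → ℝ) (b k : ℝ) : ℝ :=
  (∫ s in k..b, G s) / G k

/-- At `x = 0` both sides are `0`, since `log 0 = 0` and `y / 0 = 0`. -/
theorem mul_log_eq_div_mul_mul_log (x y : ℝ) : y * log x = y / x * (x * log x) := by
  rcases eq_or_ne x 0 with rfl | hx
  · simp
  · field_simp

section

variable {G : ℝ → ℝ} {a b : ℝ}

theorem integral_le_sub_mul_of_antitoneOn {k : ℝ} (hkb : k ≤ b) (hG : AntitoneOn G (Icc k b)) :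
    ∫ s in k..b, G s ≤ (b - k) * G k := by
  have hint : IntervalIntegrable G volume k b :=
    AntitoneOn.intervalIntegrable (by rwa [uIcc_of_le hkb])
  simpa using integral_mono_on hkb hint intervalIntegrable_const
    fun x hx => hG (left_mem_Icc.2 hkb) hx hx.1

theorem continuousOn_integral_left (hab : a ≤ b) (hGc : ContinuousOn G (Icc a b)) :
    ContinuousOn (fun k => ∫ s in k..b, G s) (Icc a b) := by
  have h := continuousOn_primitive_interval_left (μ := volume) (a := a) (b := b) (f := G)
    (by rw [uIcc_of_le hab]; exact hGc.integrableOn_Icc)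
  rwa [uIcc_of_le hab] at h

theorem hasDerivAt_integral_left (hGc : ContinuousOn G (Icc a b)) {x : ℝ} (hx : x ∈ Ioo a b) :
    HasDerivAt (fun k => ∫ s in k..b, G s) (-G x) x :=
  integral_hasDerivAt_left
    ((hGc.mono (Icc_subset_Icc_left hx.1.le)).intervalIntegrable_of_Icc hx.2.le)
    ((hGc.mono Ioo_subset_Icc_self).stronglyMeasurableAtFilter isOpen_Ioo x hx)
    (hGc.continuousAt (Icc_mem_nhds hx.1 hx.2))

theorem meanResidual_mem_Icc (hG : AntitoneOn G (Icc a b)) (hGb : 0 ≤ G b)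
    (hpos : ∀ x ∈ Ico a b, 0 < G x) {k : ℝ} (hk : k ∈ Icc a b) :
    meanResidual G b k ∈ Icc 0 (b - k) := by
  rcases hk.2.eq_or_lt with rfl | hkb
  · simp [meanResidual]
  have hGk : 0 < G k := hpos k ⟨hk.1, hkb⟩
  have hGkb : AntitoneOn G (Icc k b) := hG.mono (Icc_subset_Icc_left hk.1)
  refine ⟨div_nonneg ?_ hGk.le, (div_le_iff₀ hGk).2 (integral_le_sub_mul_of_antitoneOn hkb.le hGkb)⟩
  exact integral_nonneg hkb.le fun x hx => hGb.trans (hGkb hx (right_mem_Icc.2 hkb.le) hx.2)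

theorem continuousOn_meanResidual (hGc : ContinuousOn G (Icc a b)) (hG : AntitoneOn G (Icc a b))
    (hGb : 0 ≤ G b) (hpos : ∀ x ∈ Ico a b, 0 < G x) :
    ContinuousOn (meanResidual G b) (Icc a b) := by
  intro k hk
  rcases hk.2.eq_or_lt with rfl | hkb
  · have hlim : Tendsto (fun x => k - x) (𝓝[Icc a k] k) (𝓝 0) := by
      simpa using ((continuous_sub_left k).tendsto k).mono_left nhdsWithin_le_nhds
    have hres := fun x (hx : x ∈ Icc a k) => meanResidual_mem_Icc hG hGb hpos hx
    show Tendsto _ _ (𝓝 (meanResidual G k k))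
    rw [meanResidual, integral_same, zero_div]
    exact tendsto_of_tendsto_of_tendsto_of_le_of_le' tendsto_const_nhds hlim
      (eventually_nhdsWithin_of_forall fun x hx => (hres x hx).1)
      (eventually_nhdsWithin_of_forall fun x hx => (hres x hx).2)
  · exact (continuousOn_integral_left (hk.1.trans hk.2) hGc k hk).div (hGc k hk)
      (hpos k ⟨hk.1, hkb⟩).ne'

theorem hasDerivAt_potential {I : ℝ → ℝ} {g c x : ℝ} (hG : HasDerivAt G g x)
    (hI : HasDerivAt I (-G x) x) (hGx : G x ≠ 0) :
    HasDerivAt (fun k => -(k * G k) - I k * (log (G k) - c))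
      ((x + I x / G x) * -g - G x * (1 - log (G x) + c)) x := by
  refine (((hasDerivAt_id' x).mul hG).neg.sub (hI.mul ((hG.log hGx).sub_const c))).congr_deriv ?_
  field_simp
  ring

theorem continuousOn_potential (hab : a ≤ b) (hGc : ContinuousOn G (Icc a b))
    (hG : AntitoneOn G (Icc a b)) (hGb : 0 ≤ G b) (hpos : ∀ x ∈ Ico a b, 0 < G x) (c : ℝ) :
    ContinuousOn (fun k => -(k * G k) - (∫ s in k..b, G s) * (log (G k) - c)) (Icc a b) := by
  have h : ContinuousOn
      (fun k => -(k * G k) - (meanResidual G b k * (G k * log (G k)) - (∫ s in k..b, G s) * c))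
      (Icc a b) :=
    (continuousOn_id.mul hGc).neg.sub (((continuousOn_meanResidual hGc hG hGb hpos).mul
      (continuous_mul_log.comp_continuousOn hGc)).sub
      ((continuousOn_integral_left hab hGc).mul continuousOn_const))
  refine h.congr fun k _ => ?_
  rw [mul_sub, mul_log_eq_div_mul_mul_log (G k)]
  rfl

theorem integral_add_meanResidual_mul_deriv (hab : a ≤ b) (hGc : ContinuousOn G (Icc a b))
    (hG : AntitoneOn G (Icc a b)) (hGb : G b = 0) (hpos : ∀ x ∈ Ico a b, 0 < G x) {g : ℝ → ℝ}
    (hderiv : ∀ x ∈ Ioo a b, HasDerivAt G (g x) x) (hgc : ContinuousOn g (Icc a b)) :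
    ∫ k in a..b, (k + meanResidual G b k) * -g k =
      (∫ k in a..b, G k * (1 - log (G k) + log (G a))) + a * G a := by
  set c := log (G a)
  have hΨd : ∀ x ∈ Ioo a b,
      HasDerivAt (fun k => -(k * G k) - (∫ s in k..b, G s) * (log (G k) - c))
        ((x + meanResidual G b x) * -g x - G x * (1 - log (G x) + c)) x := fun x hx =>
    hasDerivAt_potential (hderiv x hx) (hasDerivAt_integral_left hGc hx)
      (hpos x ⟨hx.1.le, hx.2⟩).ne'
  have hint₁ : IntervalIntegrable (fun k => (k + meanResidual G b k) * -g k) volume a b :=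
    ((continuousOn_id.add (continuousOn_meanResidual hGc hG hGb.ge hpos)).mul hgc.neg
      ).intervalIntegrable_of_Icc hab
  have hint₂ : IntervalIntegrable (fun k => G k * (1 - log (G k) + c)) volume a b := by
    have h : ContinuousOn (fun k => G k * (1 + c) - G k * log (G k)) (Icc a b) :=
      (hGc.mul continuousOn_const).sub (continuous_mul_log.comp_continuousOn hGc)
    exact (h.congr fun k _ => by ring).intervalIntegrable_of_Icc hab
  have hFTC := integral_eq_sub_of_hasDerivAt_of_le hab
    (continuousOn_potential hab hGc hG hGb.ge hpos c) hΨd (hint₁.sub hint₂)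
  rw [integral_sub hint₁ hint₂] at hFTC
  simp only [hGb, integral_same, sub_self, mul_zero, zero_mul, neg_zero] at hFTC
  linarith

end

theorem stmt16_general (F F' : ℝ → ℝ)
    (hderiv : ∀ t ∈ Set.Icc (0:ℝ) 1, HasDerivWithinAt F (F' t) (Set.Icc (0:ℝ) 1) t)
    (hF'cont : ContinuousOn F' (Set.Icc (0:ℝ) 1))
    (hmono : MonotoneOn F (Set.Icc (0:ℝ) 1))
    (hone : F 1 = 1)
    (hlt : ∀ t ∈ Set.Ico (0:ℝ) 1, F t < 1) :
    (∫ k in (0:ℝ)..1,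
        (k + (∫ s in k..(1:ℝ), (1 - F s)) / (1 - F k)) * F' k) =
      ∫ k in (0:ℝ)..1,
        (1 - F k) * (1 - Real.log (1 - F k) + Real.log (1 - F 0)) := by
  have hFc : ContinuousOn F (Icc 0 1) := fun t ht => (hderiv t ht).continuousWithinAt
  have hFderiv : ∀ x ∈ Ioo (0:ℝ) 1, HasDerivAt (fun t => 1 - F t) (-F' x) x := fun x hx =>
    ((hderiv x (Ioo_subset_Icc_self hx)).hasDerivAt (Icc_mem_nhds hx.1 hx.2)).const_sub 1
  have h := integral_add_meanResidual_mul_deriv zero_le_one (continuousOn_const.sub hFc)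
    (fun x hx y hy hxy => sub_le_sub_left (hmono hx hy hxy) 1) (sub_eq_zero.2 hone.symm)
    (fun t ht => sub_pos.2 (hlt t ht)) hFderiv hF'cont.neg
  simpa [meanResidual] using h

/-- change-of-variable identity for the mean.  With `F` a C¹
nondecreasing virtual-value CDF on `[0,1]`, `F(1) = 1`, `F < 1` on `[0,1)`, and
`x(k) = k + (∫ₖ¹ (1−F))/(1−F(k))`,
`∫₀¹ x(k) F′(k) dk = ∫₀¹ (1−F(k))(1 − log(1−F(k)) + log(1−F(0))) dk`.
(The value `x(1)`, a single point, does not affect the integral; in Lean the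
formula gives `x(1) = 1 + 0/0·… = 1 + 0 = 1` anyway since division by zero is
zero.) -/
theorem stmt16 (F F' : ℝ → ℝ)
    (hderiv : ∀ t ∈ Set.Icc (0:ℝ) 1, HasDerivWithinAt F (F' t) (Set.Icc (0:ℝ) 1) t)
    (hF'cont : ContinuousOn F' (Set.Icc (0:ℝ) 1))
    (hmono : MonotoneOn F (Set.Icc (0:ℝ) 1))
    (hrange : ∀ t ∈ Set.Icc (0:ℝ) 1, F t ∈ Set.Icc (0:ℝ) 1)
    (hone : F 1 = 1)
    (hlt : ∀ t ∈ Set.Ico (0:ℝ) 1, F t < 1) :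
    (∫ k in (0:ℝ)..1,
        (k + (∫ s in k..(1:ℝ), (1 - F s)) / (1 - F k)) * F' k) =
      ∫ k in (0:ℝ)..1,
        (1 - F k) * (1 - Real.log (1 - F k) + Real.log (1 - F 0)) :=
  stmt16_general F F' hderiv hF'cont hmono hone hlt
end

section
/- Let n ≥ 1 be an integer and let F : [0,1] → [0,1] be continuously differentiable and nondecreasing with F(1) = 1 and F(t) < 1 for all t ∈ [0,1). For k ∈ [0,1) define x(k) = k + (∫ₖ¹ (1−F(s)) ds)/(1−F(k)), and set x(1) = 1. Then ∫₀¹ x(k)·n·F(k)ⁿ⁻¹·F′(k) dk = 1 + ∫₀¹ [ n(1−F(k))·( ∑_{i=1}^{n−1} (F(0)ⁱ − F(k)ⁱ)/i + log(1−F(0)) − log(1−F(k)) ) − F(k)ⁿ ] dk. (This is the change-of-variable identity expressing the expected maximum of n i.i.d. signals — the total surplus — in terms of the virtual value distribution F.) -/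
/-!
Let `G k = ∫ₖ¹ (1 - F)` and let `S k` be the bracket on the right-hand side. Then
`Φ k = k F(k)ⁿ + n G(k) S(k)` is an antiderivative of the left integrand minus the right one:
the partial sums of `-log (1 - y)` have derivative `(1 - yⁿ⁻¹) / (1 - y)`, so
`S' = Fⁿ⁻¹ F' / (1 - F)`. Since `Φ 0 = 0` and `Φ 1 = F(1)ⁿ = 1`, the identity is the fundamental
theorem of calculus. It applies up to `k = 1`, where `1 - F` vanishes, because monotonicity gives
`G k / (1 - F k) ∈ [0, 1 - k]` and `(1 - F) log (1 - F) → 0`. So the signal, both integrands and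
`Φ = k Fⁿ + n (G / (1 - F)) ((1 - F) S)` are continuous on all of `[0, 1]`.
-/

open MeasureTheory intervalIntegral Set Topology Filter

section TailIntegral

variable {g : ℝ → ℝ} {a b : ℝ}

theorem integral_le_mul_of_antitoneOn {k : ℝ} (hkb : k ≤ b) (hanti : AntitoneOn g (Icc k b)) :
    ∫ s in k..b, g s ≤ (b - k) * g k := by
  have hint : IntervalIntegrable g volume k b := by
    apply AntitoneOn.intervalIntegrable
    rwa [uIcc_of_le hkb]
  have hle := integral_mono_on hkb hint intervalIntegrable_const
    fun s hs => hanti ⟨le_rfl, hkb⟩ hs hs.1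
  simpa using hle

theorem hasDerivAt_integral_left_of_continuousOn (hg : ContinuousOn g (Icc a b)) {t : ℝ}
    (ht : t ∈ Ioo a b) : HasDerivAt (fun k => ∫ s in k..b, g s) (-g t) t := by
  have hsub : uIcc t b ⊆ Icc a b :=
    uIcc_subset_Icc (Ioo_subset_Icc_self ht) (right_mem_Icc.2 (ht.1.trans ht.2).le)
  exact integral_hasDerivAt_left (hg.mono hsub).intervalIntegrable
    ((hg.mono Ioo_subset_Icc_self).stronglyMeasurableAtFilter isOpen_Ioo t ht)
    (hg.continuousAt (Icc_mem_nhds ht.1 ht.2))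

theorem continuousOn_integral_div_self (hg : ContinuousOn g (Icc a b))
    (hanti : AntitoneOn g (Icc a b)) (hnonneg : ∀ t ∈ Icc a b, 0 ≤ g t)
    (hpos : ∀ t ∈ Ico a b, 0 < g t) :
    ContinuousOn (fun k => (∫ s in k..b, g s) / g k) (Icc a b) := by
  intro t ht
  rcases ht.2.lt_or_eq with htb | rfl
  · have hab : a ≤ b := ht.1.trans ht.2
    have hG : ContinuousOn (fun k => ∫ s in k..b, g s) (Icc a b) := by
      have h := continuousOn_primitive_interval_left (μ := volume) (f := g)
        (by rw [uIcc_of_le hab]; exact hg.integrableOn_Icc)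
      rwa [uIcc_of_le hab] at h
    exact (hG t ht).div (hg t ht) (hpos t ⟨ht.1, htb⟩).ne'
  · have hbound : ∀ k ∈ Icc a t,
        0 ≤ (∫ s in k..t, g s) / g k ∧ (∫ s in k..t, g s) / g k ≤ t - k := by
      intro k hk
      have hsub : Icc k t ⊆ Icc a t := Icc_subset_Icc_left hk.1
      refine ⟨div_nonneg (integral_nonneg hk.2 fun s hs => hnonneg s (hsub hs))
        (hnonneg k hk), ?_⟩
      exact div_le_of_le_mul₀ (hnonneg k hk) (sub_nonneg.2 hk.2)
        (integral_le_mul_of_antitoneOn hk.2 (hanti.mono hsub))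
    have hlim : Tendsto (fun k => t - k) (𝓝[Icc a t] t) (𝓝 0) := by
      simpa using tendsto_nhdsWithin_of_tendsto_nhds ((continuous_sub_left t).tendsto t)
    simp only [ContinuousWithinAt, integral_same, zero_div]
    exact squeeze_zero' (eventually_nhdsWithin_of_forall fun k hk => (hbound k hk).1)
      (eventually_nhdsWithin_of_forall fun k hk => (hbound k hk).2) hlim

end TailIntegral

section LogTaylor

/-- For `|y| < 1` this is `-∑_{i > m} yⁱ / i`, the tail of the series of `log (1 - y)`. -/
noncomputable def logTaylorRem (m : ℕ) (y : ℝ) : ℝ :=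
  ∑ i ∈ Finset.Icc 1 m, y ^ i / i + Real.log (1 - y)

theorem logTaylorRem_succ (m : ℕ) (y : ℝ) :
    logTaylorRem (m + 1) y = logTaylorRem m y + y ^ (m + 1) / (m + 1 : ℕ) := by
  rw [logTaylorRem, logTaylorRem, Finset.sum_Icc_succ_top (by omega)]
  ring

theorem logTaylorRem_sub (m : ℕ) (a b : ℝ) :
    logTaylorRem m a - logTaylorRem m b =
      (∑ i ∈ Finset.Icc 1 m, (a ^ i - b ^ i) / (i : ℝ)) +
        Real.log (1 - a) - Real.log (1 - b) := by
  simp only [logTaylorRem, sub_div, Finset.sum_sub_distrib]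
  ring

theorem hasDerivAt_logTaylorRem (m : ℕ) {y : ℝ} (hy : y ≠ 1) :
    HasDerivAt (logTaylorRem m) (-(y ^ m / (1 - y))) y := by
  have hy' : 1 - y ≠ 0 := sub_ne_zero.2 hy.symm
  induction m with
  | zero =>
    have h0 : logTaylorRem 0 = fun z => Real.log (1 - z) := by
      funext z; simp [logTaylorRem]
    rw [h0]
    exact (((hasDerivAt_id' y).const_sub 1).log hy').congr_deriv (by simp [neg_div])
  | succ m ih =>
    rw [funext (logTaylorRem_succ m)]
    refine (ih.fun_add ((hasDerivAt_pow (m + 1) y).div_const ((m + 1 : ℕ) : ℝ))).congr_deriv ?_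
    rw [Nat.add_sub_cancel]
    field_simp
    ring

theorem continuous_one_sub_mul_logTaylorRem (m : ℕ) :
    Continuous fun y => (1 - y) * logTaylorRem m y := by
  have h := Real.continuous_mul_log.comp (continuous_sub_left (1 : ℝ))
  simp only [logTaylorRem, mul_add]
  have hsum : Continuous fun y : ℝ => (1 - y) * ∑ i ∈ Finset.Icc 1 m, y ^ i / i := by fun_prop
  exact hsum.add h

theorem ContinuousOn.one_sub_mul_logTaylorRem_sub {F : ℝ → ℝ} {s : Set ℝ}
    (hF : ContinuousOn F s) (m : ℕ) (c : ℝ) :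
    ContinuousOn (fun k => (1 - F k) * (logTaylorRem m c - logTaylorRem m (F k))) s := by
  have h : ContinuousOn
      (fun k => (1 - F k) * logTaylorRem m c - (1 - F k) * logTaylorRem m (F k)) s :=
    ((continuousOn_const.sub hF).mul continuousOn_const).sub
      ((continuous_one_sub_mul_logTaylorRem m).comp_continuousOn hF)
  refine h.congr fun k _ => ?_
  ring

end LogTaylor

section Signal

variable {F : ℝ → ℝ}

/-- The paper's `x(k)`. At `k = 1` the quotient is `0 / 0 = 0`, which matches `x(1) = 1`. -/
noncomputable def signal (F : ℝ → ℝ) (k : ℝ) : ℝ :=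
  k + (∫ s in k..1, (1 - F s)) / (1 - F k)

noncomputable def surplusPotential (n : ℕ) (F : ℝ → ℝ) (k : ℝ) : ℝ :=
  k * F k ^ n +
    (∫ s in k..1, (1 - F s)) * (n * (logTaylorRem (n - 1) (F 0) - logTaylorRem (n - 1) (F k)))

theorem hasDerivAt_surplusPotential {F' : ℝ → ℝ} {t : ℝ} (n : ℕ)
    (hF : HasDerivAt F (F' t) t) (hFt : F t ≠ 1)
    (hG : HasDerivAt (fun k => ∫ s in k..1, (1 - F s)) (-(1 - F t)) t) :
    HasDerivAt (surplusPotential n F)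
      (signal F t * (n * F t ^ (n - 1) * F' t) -
        (n * (1 - F t) * (logTaylorRem (n - 1) (F 0) - logTaylorRem (n - 1) (F t)) -
          F t ^ n)) t := by
  have hS := ((hasDerivAt_logTaylorRem (n - 1) hFt).comp t hF).const_sub
    (logTaylorRem (n - 1) (F 0))
  refine (((hasDerivAt_id' t).mul (hF.pow n)).add
    (hG.mul (hS.const_mul (n : ℝ)))).congr_deriv ?_
  have h1 : 1 - F t ≠ 0 := sub_ne_zero.2 hFt.symm
  simp only [signal, Pi.pow_apply, Function.comp_apply]
  field_simp
  ring

theorem continuousOn_integral_one_sub_div (hFc : ContinuousOn F (Icc 0 1))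
    (hmono : MonotoneOn F (Icc 0 1)) (hle : ∀ t ∈ Icc (0 : ℝ) 1, F t ≤ 1)
    (hlt : ∀ t ∈ Ico (0 : ℝ) 1, F t < 1) :
    ContinuousOn (fun k => (∫ s in k..1, (1 - F s)) / (1 - F k)) (Icc 0 1) :=
  continuousOn_integral_div_self (continuousOn_const.sub hFc)
    (fun _ hx _ hy hxy => sub_le_sub_left (hmono hx hy hxy) 1)
    (fun t ht => sub_nonneg.2 (hle t ht)) (fun t ht => sub_pos.2 (hlt t ht))

theorem continuousOn_surplusPotential (n : ℕ) (hFc : ContinuousOn F (Icc 0 1))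
    (hlt : ∀ t ∈ Ico (0 : ℝ) 1, F t < 1)
    (hq : ContinuousOn (fun k => (∫ s in k..1, (1 - F s)) / (1 - F k)) (Icc 0 1)) :
    ContinuousOn (surplusPotential n F) (Icc 0 1) := by
  have h : ContinuousOn (fun k => k * F k ^ n + n * ((∫ s in k..1, (1 - F s)) / (1 - F k) *
      ((1 - F k) * (logTaylorRem (n - 1) (F 0) - logTaylorRem (n - 1) (F k))))) (Icc 0 1) :=
    (continuousOn_id.mul (hFc.pow n)).add
      (continuousOn_const.mul (hq.mul (hFc.one_sub_mul_logTaylorRem_sub (n - 1) (F 0))))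
  refine h.congr fun k hk => ?_
  rcases hk.2.lt_or_eq with hk1 | rfl
  · have h1 : 1 - F k ≠ 0 := (sub_pos.2 (hlt k ⟨hk.1, hk1⟩)).ne'
    simp only [surplusPotential]
    field_simp
  · simp [surplusPotential]

end Signal

theorem stmt17_general (n : ℕ) (F F' : ℝ → ℝ)
    (hderiv : ∀ t ∈ Set.Icc (0:ℝ) 1, HasDerivWithinAt F (F' t) (Set.Icc (0:ℝ) 1) t)
    (hF'cont : ContinuousOn F' (Set.Icc (0:ℝ) 1))
    (hmono : MonotoneOn F (Set.Icc (0:ℝ) 1))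
    (hrange : ∀ t ∈ Set.Icc (0:ℝ) 1, F t ∈ Set.Icc (0:ℝ) 1)
    (hone : F 1 = 1)
    (hlt : ∀ t ∈ Set.Ico (0:ℝ) 1, F t < 1) :
    (∫ k in (0:ℝ)..1,
        (k + (∫ s in k..(1:ℝ), (1 - F s)) / (1 - F k)) *
          (n * F k ^ (n - 1) * F' k)) =
      1 + ∫ k in (0:ℝ)..1,
        (n * (1 - F k) *
            ((∑ i ∈ Finset.Icc 1 (n - 1), (F 0 ^ i - F k ^ i) / (i : ℝ)) +
              Real.log (1 - F 0) - Real.log (1 - F k)) -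
          F k ^ n) := by
  have hFc : ContinuousOn F (Icc 0 1) := fun t ht => (hderiv t ht).continuousWithinAt
  have hq := continuousOn_integral_one_sub_div hFc hmono (fun t ht => (hrange t ht).2) hlt
  have hL : IntervalIntegrable (fun k => signal F k * (n * F k ^ (n - 1) * F' k)) volume 0 1 :=
    ((continuousOn_id.add hq).mul ((continuousOn_const.mul (hFc.pow _)).mul hF'cont))
      |>.intervalIntegrable_of_Icc zero_le_one
  have hR : IntervalIntegrable (fun k => n * (1 - F k) *
      (logTaylorRem (n - 1) (F 0) - logTaylorRem (n - 1) (F k)) - F k ^ n) volume 0 1 := by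
    simp only [mul_assoc]
    exact ((continuousOn_const.mul (hFc.one_sub_mul_logTaylorRem_sub (n - 1) (F 0))).sub
      (hFc.pow n)).intervalIntegrable_of_Icc zero_le_one
  have hftc := integral_eq_sub_of_hasDerivAt_of_le zero_le_one
    (continuousOn_surplusPotential n hFc hlt hq)
    (fun t ht => hasDerivAt_surplusPotential n
      ((hderiv t (Ioo_subset_Icc_self ht)).hasDerivAt (Icc_mem_nhds ht.1 ht.2))
      (hlt t ⟨ht.1.le, ht.2⟩).ne
      (hasDerivAt_integral_left_of_continuousOn (continuousOn_const.sub hFc) ht))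
    (hL.sub hR)
  rw [integral_sub hL hR] at hftc
  have hΦ0 : surplusPotential n F 0 = 0 := by simp [surplusPotential]
  have hΦ1 : surplusPotential n F 1 = 1 := by simp [surplusPotential, hone]
  have key : ∫ k in (0 : ℝ)..1, signal F k * (n * F k ^ (n - 1) * F' k) =
      1 + ∫ k in (0 : ℝ)..1, (n * (1 - F k) *
        (logTaylorRem (n - 1) (F 0) - logTaylorRem (n - 1) (F k)) - F k ^ n) := by
    linarith
  simp only [← logTaylorRem_sub]
  exact key

/-- change-of-variable identity for the expected maximum of `n`
i.i.d. signals (the total surplus).  With `F` a C¹ nondecreasing virtual-value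
CDF on `[0,1]`, `F(1) = 1`, `F < 1` on `[0,1)`, and
`x(k) = k + (∫ₖ¹ (1−F))/(1−F(k))`:
`∫₀¹ x(k)·n·F(k)ⁿ⁻¹·F′(k) dk
  = 1 + ∫₀¹ [ n(1−F(k))(∑_{i=1}^{n−1} (F(0)ⁱ−F(k)ⁱ)/i + log(1−F(0)) − log(1−F(k)))
              − F(k)ⁿ ] dk`. -/
theorem stmt17 (n : ℕ) (hn : 1 ≤ n) (F F' : ℝ → ℝ)
    (hderiv : ∀ t ∈ Set.Icc (0:ℝ) 1, HasDerivWithinAt F (F' t) (Set.Icc (0:ℝ) 1) t)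
    (hF'cont : ContinuousOn F' (Set.Icc (0:ℝ) 1))
    (hmono : MonotoneOn F (Set.Icc (0:ℝ) 1))
    (hrange : ∀ t ∈ Set.Icc (0:ℝ) 1, F t ∈ Set.Icc (0:ℝ) 1)
    (hone : F 1 = 1)
    (hlt : ∀ t ∈ Set.Ico (0:ℝ) 1, F t < 1) :
    (∫ k in (0:ℝ)..1,
        (k + (∫ s in k..(1:ℝ), (1 - F s)) / (1 - F k)) *
          (n * F k ^ (n - 1) * F' k)) =
      1 + ∫ k in (0:ℝ)..1,
        (n * (1 - F k) *
            ((∑ i ∈ Finset.Icc 1 (n - 1), (F 0 ^ i - F k ^ i) / (i : ℝ)) +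
              Real.log (1 - F 0) - Real.log (1 - F k)) -
          F k ^ n) :=
  stmt17_general n F F' hderiv hF'cont hmono hrange hone hlt
end

section
/- For every a ∈ (0,1), a(a − 2·log a) > (a(1 − log a + (1/2)(log a)²))². (Consequently, the interdependent interim value function v(s₁,s₂) = min(a/((1−s₁)(1−s₂)), 1) with i.i.d. uniform signals, calibrated so that a(1 − log a + (1/2)(log a)²) = p, induces Prob(v₁=1, v₂=1) strictly greater than p² and hence violates consistency with an independent binary prior.) -/
/-- for every `a ∈ (0,1)`,
`a(a − 2 log a) > (a(1 − log a + (1/2)(log a)²))²`; hence the candidate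
interdependent interim value function violates consistency with an independent
binary prior. -/
theorem stmt19 (a : ℝ) (ha : a ∈ Set.Ioo (0:ℝ) 1) :
    (a * (1 - Real.log a + (1 / 2) * (Real.log a) ^ 2)) ^ 2 <
      a * (a - 2 * Real.log a) := by
  obtain ⟨ha0, ha1⟩ := ha
  obtain ⟨t, ht⟩ : ∃ t : ℝ, t = -Real.log a := ⟨_, rfl⟩
  have hL : Real.log a = -t := by rw [ht, neg_neg]
  have htpos : 0 < t := by
    have := Real.log_neg ha0 ha1
    rw [ht]; linarith
  have hae : a = Real.exp (-t) := by rw [← hL, Real.exp_log ha0]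
  have hsum : 1 + t + t ^ 2 / 2 + t ^ 3 / 6 ≤ Real.exp t := by
    have h := Real.sum_le_exp_of_nonneg htpos.le 4
    simp [Finset.sum_range_succ, Nat.factorial] at h
    linarith
  have key : (1 + t + t ^ 2 / 2) ^ 2 < 1 + 2 * t * Real.exp t := by
    have h1 : t * (1 + t + t ^ 2 / 2 + t ^ 3 / 6) ≤ t * Real.exp t :=
      mul_le_mul_of_nonneg_left hsum htpos.le
    have h2 : (1 + t + t ^ 2 / 2) ^ 2 = 1 + 2 * t + 2 * t ^ 2 + t ^ 3 + t ^ 4 / 4 := by ring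
    have h3 : t * (1 + t + t ^ 2 / 2 + t ^ 3 / 6) = t + t ^ 2 + t ^ 3 / 2 + t ^ 4 / 6 := by ring
    have h4 : 0 < t ^ 4 := pow_pos htpos 4
    rw [h2]; rw [h3] at h1; linarith
  have hE : Real.exp (-t) * Real.exp t = 1 := by
    rw [← Real.exp_add]; simp
  have hEpos : 0 < Real.exp (-t) := Real.exp_pos _
  have hEpos' : 0 < Real.exp t := Real.exp_pos _
  rw [hL, hae]
  nlinarith [mul_pos hEpos hEpos, sq_nonneg (1 + t + t ^ 2 / 2),
    mul_lt_mul_of_pos_left key (mul_pos hEpos hEpos)]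
end
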